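/- arXiv:1510.00109 — 3 statements merged into one kernel-verified Lean document; each statement's English description precedes it below -/
import Mathlib

section
/- Let A > 0, k > 0, and α > 1. Then the origin is an exponentially stable equilibrium of the averaged system Ẋ̄ = f_av(X̄): f_av(0) = 0, and there exist constants r > 0, c > 0, λ > 0 such that every solution X̄ : [0,∞) → ℝ⁴ of Ẋ̄ = f_av(X̄) with ‖X̄(0)‖ ≤ r satisfies ‖X̄(t)‖ ≤ c e^{−λt} ‖X̄(0)‖ for all t ≥ 0. -/
open Real Set

set_option maxHeartbeats 1600000 in
lemma my_taylor (α : ℝ) (hα : 1 < α) {ρ : ℝ} (h : ρ ∈ Icc (1/4:ℝ) (9/4)) :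
    |ρ ^ (-α) - 1 + α * (ρ - 1)| ≤ (α * (α + 1) * (4:ℝ) ^ (α + 2)) * (ρ - 1) ^ 2 := by
  have h4 : (0:ℝ) < (4:ℝ) ^ (α + 2) := Real.rpow_pos_of_pos (by norm_num) _
  have hα0 : (0:ℝ) < α := by linarith
  have hmono : ∀ s : ℝ, s ∈ Icc (1/4:ℝ) (9/4) → s ^ (-(α+2)) ≤ (4:ℝ) ^ (α + 2) := by
    intro s hsmem
    have hspos : (0:ℝ) < s := lt_of_lt_of_le (by norm_num) hsmem.1
    rw [Real.rpow_neg hspos.le, ← Real.inv_rpow hspos.le]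
    apply Real.rpow_le_rpow (inv_nonneg.mpr hspos.le) _ (by linarith)
    rw [inv_le_comm₀ hspos (by norm_num)]
    linarith [hsmem.1]
  -- inner bound
  have inner : ∀ t ∈ Icc (1/4:ℝ) (9/4), |t ^ (-α - 1) - 1| ≤ (α + 1) * (4:ℝ) ^ (α + 2) * |t - 1| := by
    intro t ht
    have hs : uIcc (1:ℝ) t ⊆ Icc (1/4:ℝ) (9/4) :=
      uIcc_subset_Icc (by norm_num) ht
    have key := (convex_uIcc (1:ℝ) t).norm_image_sub_le_of_norm_hasDerivWithin_le
      (f := fun s => s ^ (-α - 1)) (f' := fun s => (-α - 1) * s ^ (-α - 1 - 1))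
      (C := (α + 1) * (4:ℝ) ^ (α + 2)) ?_ ?_ left_mem_uIcc right_mem_uIcc
    · simpa [Real.one_rpow, Real.norm_eq_abs] using key
    · intro s hs'
      have hspos : (0:ℝ) < s := lt_of_lt_of_le (by norm_num) (hs hs').1
      exact (Real.hasDerivAt_rpow_const (Or.inl hspos.ne')).hasDerivWithinAt
    · intro s hs'
      have hsmem := hs hs'
      have hb := hmono s hsmem
      rw [show (-(α+2) : ℝ) = -α - 1 - 1 by ring] at hb
      have hspos : (0:ℝ) < s := lt_of_lt_of_le (by norm_num) hsmem.1
      have hppos : (0:ℝ) ≤ s ^ (-α - 1 - 1) := (Real.rpow_pos_of_pos hspos _).le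
      rw [Real.norm_eq_abs, abs_mul, abs_of_nonneg hppos, abs_of_neg (by linarith : (-α-1:ℝ) < 0)]
      calc -(-α-1) * s ^ (-α-1-1) = (α+1) * s ^ (-α-1-1) := by ring
        _ ≤ (α + 1) * (4:ℝ) ^ (α + 2) := by nlinarith
  -- outer bound
  have houter : uIcc (1:ℝ) ρ ⊆ Icc (1/4:ℝ) (9/4) := uIcc_subset_Icc (by norm_num) h
  have key := (convex_uIcc (1:ℝ) ρ).norm_image_sub_le_of_norm_hasDerivWithin_le
    (f := fun s => s ^ (-α) + α * s) (f' := fun s => (-α) * s ^ (-α - 1) + α)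
    (C := α * ((α + 1) * (4:ℝ) ^ (α + 2) * |ρ - 1|)) ?_ ?_ left_mem_uIcc right_mem_uIcc
  · rw [Real.norm_eq_abs, Real.norm_eq_abs] at key
    have h1 : ρ ^ (-α) + α * ρ - ((1:ℝ) ^ (-α) + α * 1) = ρ ^ (-α) - 1 + α * (ρ - 1) := by
      rw [Real.one_rpow]; ring
    rw [h1] at key
    calc |ρ ^ (-α) - 1 + α * (ρ - 1)| ≤ α * ((α + 1) * (4:ℝ) ^ (α + 2) * |ρ - 1|) * |ρ - 1| := key
      _ = (α * (α + 1) * (4:ℝ) ^ (α + 2)) * (ρ - 1) ^ 2 := by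
          rw [← sq_abs (ρ - 1)]; ring
  · intro s hs'
    have hspos : (0:ℝ) < s := lt_of_lt_of_le (by norm_num) (houter hs').1
    exact ((Real.hasDerivAt_rpow_const (Or.inl hspos.ne')).add
      ((hasDerivAt_id s).const_mul α)).hasDerivWithinAt.congr_deriv (by ring)
  · intro s hs'
    have hsmem := houter hs'
    have hspos : (0:ℝ) < s := lt_of_lt_of_le (by norm_num) hsmem.1
    have h1 : |s - 1| ≤ |ρ - 1| := by
      rcases le_total 1 ρ with hc | hc
      · rw [uIcc_of_le hc] at hs'; rw [abs_of_nonneg (by linarith [hs'.1]), abs_of_nonneg (by linarith)]; linarith [hs'.2]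
      · rw [uIcc_of_ge hc] at hs'; rw [abs_of_nonpos (by linarith [hs'.2]), abs_of_nonpos (by linarith)]; linarith [hs'.1]
    have h2 := inner s hsmem
    have h3 : (-α) * s ^ (-α - 1) + α = (-α) * (s ^ (-α-1) - 1) := by ring
    simp only [Real.norm_eq_abs]; rw [h3, abs_mul, abs_neg, abs_of_pos hα0]
    have hpos : (0:ℝ) ≤ (α+1) * (4:ℝ)^(α+2) := by positivity
    calc α * |s ^ (-α-1) - 1| ≤ α * ((α + 1) * (4:ℝ) ^ (α + 2) * |s - 1|) :=
        mul_le_mul_of_nonneg_left h2 hα0.le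
      _ ≤ α * ((α + 1) * (4:ℝ) ^ (α + 2) * |ρ - 1|) :=
        mul_le_mul_of_nonneg_left (mul_le_mul_of_nonneg_left h1 hpos) hα0.le

set_option maxHeartbeats 1600000 in

lemma geo_facts (x y c σ : ℝ) (hcs : c^2 + σ^2 = 1) (hq : x^2 + y^2 ≤ 1/4) :
    (x-c)^2 + (y-σ)^2 = 1 + (x^2+y^2) - 2*(x*c+y*σ) ∧
    1/4 ≤ (x-c)^2 + (y-σ)^2 ∧ (x-c)^2 + (y-σ)^2 ≤ 9/4 ∧
    |x - c| ≤ 3/2 ∧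
    ((x-c)^2 + (y-σ)^2 - 1)^2 ≤ 7*(x^2+y^2) ∧
    |2*x*(x*c+y*σ) + c*(x^2+y^2) - x*(x^2+y^2)| ≤ 7/2*(x^2+y^2) := by
  set q := x^2 + y^2 with hqdef
  set w := x*c + y*σ with hwdef
  have hq0 : (0:ℝ) ≤ q := by positivity
  have hρ1 : (x-c)^2 + (y-σ)^2 = 1 + q - 2*w := by linear_combination hcs
  have hw2 : w^2 ≤ q := by nlinarith [sq_nonneg (x*σ - y*c)]
  have hx2q : x^2 ≤ q := by nlinarith [sq_nonneg y]
  clear_value q w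
  have hwabs : |w| ≤ 1/2 := by
    rw [abs_le]; constructor <;> nlinarith
  obtain ⟨hwlo, hwhi⟩ := abs_le.mp hwabs
  have hxabs : |x| ≤ 1/2 := by
    rw [abs_le]; constructor <;> nlinarith
  obtain ⟨hxlo, hxhi⟩ := abs_le.mp hxabs
  have hcabs : |c| ≤ 1 := by
    rw [abs_le]; constructor <;> nlinarith [sq_nonneg σ]
  refine ⟨hρ1, ?_, ?_, ?_, ?_, ?_⟩
  · rw [hρ1]
    nlinarith [mul_nonneg (by linarith : (0:ℝ) ≤ 3/2 - w) (by linarith : (0:ℝ) ≤ 1/2 - w)]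
  · rw [hρ1]; linarith
  · have : |x - c| ≤ |x| + |c| := by
      rw [sub_eq_add_neg]
      exact (abs_add_le x (-c)).trans (by rw [abs_neg])
    linarith
  · rw [hρ1]
    have e0 : (1 + q - 2*w - 1)^2 = q^2 - 4*q*w + 4*w^2 := by ring
    rw [e0]
    have e1 : q*q ≤ (1/4)*q := mul_le_mul_of_nonneg_right hq hq0
    have e2 : 4*q*(-w) ≤ 4*q*(1/2) :=
      mul_le_mul_of_nonneg_left (by linarith) (by linarith)
    nlinarith [hw2]
  · have hxw : |x| * |w| ≤ q := by
      nlinarith [mul_nonneg (abs_nonneg x) (abs_nonneg w), sq_abs x, sq_abs w,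
        mul_le_mul hx2q hw2 (sq_nonneg w) hq0]
    have ha : |2*x*w + c*q - x*q| ≤ |2*x*w + c*q| + |x*q| := by
      rw [sub_eq_add_neg]
      exact (abs_add_le _ _).trans (by rw [abs_neg])
    have hb : |2*x*w + c*q| ≤ |2*x*w| + |c*q| := abs_add_le _ _
    have hc1 : |2*x*w| = 2*(|x| * |w|) := by
      rw [show 2*x*w = 2*(x*w) by ring, abs_mul, abs_mul]
      norm_num
    have hc2 : |c*q| = |c| * q := by rw [abs_mul, abs_of_nonneg hq0]
    have hc3 : |x*q| = |x| * q := by rw [abs_mul, abs_of_nonneg hq0]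
    have e1 : |c| * q ≤ 1 * q := mul_le_mul_of_nonneg_right hcabs hq0
    have e2 : |x| * q ≤ (1/2) * q := mul_le_mul_of_nonneg_right hxabs hq0

    linarith

set_option maxHeartbeats 1000000 in
lemma my_ptwise (α : ℝ) (hα : 1 < α) (x y c σ : ℝ) (hcs : c^2 + σ^2 = 1)
    (hq : x^2 + y^2 ≤ 1/4) :
    |(x - c)/((x-c)^2+(y-σ)^2) ^ α - (x - c - 2*α*c*(x*c+y*σ))| ≤
      (11*(α*(α+1)*(4:ℝ)^(α+2)) + 4*α) * (x^2+y^2) := by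
  obtain ⟨hρ1, hρlo, hρhi, hxc, hρ2, hterm2⟩ := geo_facts x y c σ hcs hq
  have hα0 : (0:ℝ) < α := by linarith
  have hM0 : (0:ℝ) < α*(α+1)*(4:ℝ)^(α+2) := by positivity
  have hq0 : (0:ℝ) ≤ x^2 + y^2 := by positivity
  have hρpos : (0:ℝ) < (x-c)^2+(y-σ)^2 := lt_of_lt_of_le (by norm_num) hρlo
  have hdiv : (x - c)/((x-c)^2+(y-σ)^2) ^ α
      = (x-c) * ((x-c)^2+(y-σ)^2) ^ (-α) := by
    rw [Real.rpow_neg hρpos.le, div_eq_mul_inv]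
  have hDb := my_taylor α hα ⟨hρlo, hρhi⟩
  set E := ((x-c)^2+(y-σ)^2) ^ (-α) with hE
  have hiden : (x - c)/((x-c)^2+(y-σ)^2) ^ α - (x - c - 2*α*c*(x*c+y*σ))
      = (x-c)*(E - 1 + α*((x-c)^2+(y-σ)^2 - 1))
        + α*(2*x*(x*c+y*σ) + c*(x^2+y^2) - x*(x^2+y^2)) := by
    rw [hdiv]
    linear_combination (α*(x-c)) * hρ1 - (2*α*(x-c)) * hcs
  rw [hiden]
  have hA1 : |(x-c)*(E - 1 + α*((x-c)^2+(y-σ)^2 - 1))|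
      ≤ (3/2) * ((α*(α+1)*(4:ℝ)^(α+2)) * (7*(x^2+y^2))) := by
    rw [abs_mul]
    exact mul_le_mul hxc (hDb.trans (mul_le_mul_of_nonneg_left hρ2 hM0.le))
      (abs_nonneg _) (by norm_num)
  have hA2 : |α*(2*x*(x*c+y*σ) + c*(x^2+y^2) - x*(x^2+y^2))| ≤ α * (7/2*(x^2+y^2)) := by
    rw [abs_mul, abs_of_pos hα0]
    exact mul_le_mul_of_nonneg_left hterm2 hα0.le
  have htri := abs_add_le ((x-c)*(E - 1 + α*((x-c)^2+(y-σ)^2 - 1)))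
    (α*(2*x*(x*c+y*σ) + c*(x^2+y^2) - x*(x^2+y^2)))
  have hMq : (0:ℝ) ≤ (α*(α+1)*(4:ℝ)^(α+2)) * (x^2+y^2) := by positivity
  have hαq : (0:ℝ) ≤ α * (x^2+y^2) := by positivity
  linarith

set_option maxHeartbeats 1000000 in
lemma int_est1 (A α : ℝ) (hA : 0 < A) (hα : 1 < α) (x y : ℝ) (hq : x^2+y^2 ≤ 1/4) :
    |(A / (2 * π)) * (∫ s in (0:ℝ)..(2*π),
        (x - Real.cos s) / ((x - Real.cos s) ^ 2 + (y - Real.sin s) ^ 2) ^ α)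
      - A*(1-α)*x|
    ≤ A*(11*(α*(α+1)*(4:ℝ)^(α+2)) + 4*α)*(x^2+y^2) := by
  have hα0 : (0:ℝ) < α := by linarith
  have hπ : (0:ℝ) < 2*π := by positivity
  set K := 11*(α*(α+1)*(4:ℝ)^(α+2)) + 4*α with hK
  have hK0 : 0 < K := by positivity
  set G : ℝ → ℝ := fun s => (x - Real.cos s) / ((x - Real.cos s) ^ 2 + (y - Real.sin s) ^ 2) ^ α with hG
  set H : ℝ → ℝ := fun s => x - Real.cos s - 2*α*Real.cos s*(x*Real.cos s + y*Real.sin s) with hH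
  have hρpos : ∀ s : ℝ, (0:ℝ) < (x - Real.cos s) ^ 2 + (y - Real.sin s) ^ 2 := by
    intro s
    exact lt_of_lt_of_le (by norm_num)
      (geo_facts x y (Real.cos s) (Real.sin s) (Real.cos_sq_add_sin_sq s) hq).2.1
  have hGc : Continuous G := by
    apply Continuous.div (by continuity)
    · apply Continuous.rpow_const (by continuity)
      intro s
      exact Or.inr hα0.le
    · intro s
      exact (Real.rpow_pos_of_pos (hρpos s) α).ne'
  have hHc : Continuous H := by continuity
  have hGi : IntervalIntegrable G MeasureTheory.volume 0 (2*π) := hGc.intervalIntegrable _ _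
  have hHi : IntervalIntegrable H MeasureTheory.volume 0 (2*π) := hHc.intervalIntegrable _ _
  -- integral of H
  have hHval : (∫ s in (0:ℝ)..(2*π), H s) = 2*π*(1-α)*x := by
    have e : H = fun s => x - Real.cos s - ((2*α*x)*Real.cos s^2 + (2*α*y)*(Real.sin s * Real.cos s)) := by
      funext s; rw [hH]; ring
    rw [e]
    rw [intervalIntegral.integral_sub (by apply Continuous.intervalIntegrable; continuity)
      (by apply Continuous.intervalIntegrable; continuity)]
    rw [intervalIntegral.integral_sub (by apply Continuous.intervalIntegrable; continuity)
      (by apply Continuous.intervalIntegrable; continuity)]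
    rw [intervalIntegral.integral_add (by apply Continuous.intervalIntegrable; continuity)
      (by apply Continuous.intervalIntegrable; continuity)]
    rw [intervalIntegral.integral_const_mul, intervalIntegral.integral_const_mul]
    rw [intervalIntegral.integral_const, integral_cos, integral_cos_sq, integral_sin_mul_cos₁]
    simp [Real.sin_two_pi, Real.cos_two_pi]
    ring
  -- pointwise bound
  have hpt : ∀ s ∈ Set.uIoc (0:ℝ) (2*π), ‖G s - H s‖ ≤ K * (x^2+y^2) := by
    intro s _
    have h := my_ptwise α hα x y (Real.cos s) (Real.sin s) (Real.cos_sq_add_sin_sq s) hq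
    rw [Real.norm_eq_abs]
    exact h
  have hint : ‖∫ s in (0:ℝ)..(2*π), (G s - H s)‖ ≤ K * (x^2+y^2) * |2*π - 0| :=
    intervalIntegral.norm_integral_le_of_norm_le_const hpt
  rw [intervalIntegral.integral_sub hGi hHi] at hint
  rw [Real.norm_eq_abs, sub_zero, abs_of_pos hπ] at hint
  -- assemble
  have hsplit : (A / (2 * π)) * (∫ s in (0:ℝ)..(2*π), G s) - A*(1-α)*x
      = (A / (2 * π)) * ((∫ s in (0:ℝ)..(2*π), G s) - (∫ s in (0:ℝ)..(2*π), H s)) := by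
    rw [hHval]; field_simp
  rw [hsplit, abs_mul, abs_of_pos (by positivity : (0:ℝ) < A / (2*π))]
  calc A / (2*π) * |(∫ s in (0:ℝ)..(2*π), G s) - (∫ s in (0:ℝ)..(2*π), H s)|
      ≤ A / (2*π) * (K * (x^2+y^2) * (2*π)) := by
        apply mul_le_mul_of_nonneg_left hint (by positivity)
    _ = A * K * (x^2+y^2) := by field_simp

set_option maxHeartbeats 1000000 in
lemma int_est2 (A α : ℝ) (hA : 0 < A) (hα : 1 < α) (x y : ℝ) (hq : x^2+y^2 ≤ 1/4) :
    |(A / (2 * π)) * (∫ s in (0:ℝ)..(2*π),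
        (y - Real.sin s) / ((x - Real.cos s) ^ 2 + (y - Real.sin s) ^ 2) ^ α)
      - A*(1-α)*y|
    ≤ A*(11*(α*(α+1)*(4:ℝ)^(α+2)) + 4*α)*(x^2+y^2) := by
  have hα0 : (0:ℝ) < α := by linarith
  have hπ : (0:ℝ) < 2*π := by positivity
  set K := 11*(α*(α+1)*(4:ℝ)^(α+2)) + 4*α with hK
  have hK0 : 0 < K := by positivity
  set G : ℝ → ℝ := fun s => (y - Real.sin s) / ((x - Real.cos s) ^ 2 + (y - Real.sin s) ^ 2) ^ α with hG
  set H : ℝ → ℝ := fun s => y - Real.sin s - 2*α*Real.sin s*(x*Real.cos s + y*Real.sin s) with hH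
  have hρpos : ∀ s : ℝ, (0:ℝ) < (x - Real.cos s) ^ 2 + (y - Real.sin s) ^ 2 := by
    intro s
    exact lt_of_lt_of_le (by norm_num)
      (geo_facts x y (Real.cos s) (Real.sin s) (Real.cos_sq_add_sin_sq s) hq).2.1
  have hGc : Continuous G := by
    apply Continuous.div (by continuity)
    · apply Continuous.rpow_const (by continuity)
      intro s
      exact Or.inr hα0.le
    · intro s
      exact (Real.rpow_pos_of_pos (hρpos s) α).ne'
  have hHc : Continuous H := by continuity
  have hGi : IntervalIntegrable G MeasureTheory.volume 0 (2*π) := hGc.intervalIntegrable _ _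
  have hHi : IntervalIntegrable H MeasureTheory.volume 0 (2*π) := hHc.intervalIntegrable _ _
  have hHval : (∫ s in (0:ℝ)..(2*π), H s) = 2*π*(1-α)*y := by
    have e : H = fun s => y - Real.sin s - ((2*α*y)*Real.sin s^2 + (2*α*x)*(Real.sin s * Real.cos s)) := by
      funext s; rw [hH]; ring
    rw [e]
    rw [intervalIntegral.integral_sub (by apply Continuous.intervalIntegrable; continuity)
      (by apply Continuous.intervalIntegrable; continuity)]
    rw [intervalIntegral.integral_sub (by apply Continuous.intervalIntegrable; continuity)
      (by apply Continuous.intervalIntegrable; continuity)]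
    rw [intervalIntegral.integral_add (by apply Continuous.intervalIntegrable; continuity)
      (by apply Continuous.intervalIntegrable; continuity)]
    rw [intervalIntegral.integral_const_mul, intervalIntegral.integral_const_mul]
    rw [intervalIntegral.integral_const, integral_sin, integral_sin_sq, integral_sin_mul_cos₁]
    simp [Real.sin_two_pi, Real.cos_two_pi]
    ring
  have hpt : ∀ s ∈ Set.uIoc (0:ℝ) (2*π), ‖G s - H s‖ ≤ K * (x^2+y^2) := by
    intro s _
    have h := my_ptwise α hα y x (Real.sin s) (Real.cos s) (Real.sin_sq_add_cos_sq s)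
      (by linarith : y^2 + x^2 ≤ 1/4)
    rw [show (y - Real.sin s)^2 + (x - Real.cos s)^2 = (x - Real.cos s)^2 + (y - Real.sin s)^2 from add_comm _ _,
      show y*Real.sin s + x*Real.cos s = x*Real.cos s + y*Real.sin s from add_comm _ _,
      show y^2 + x^2 = x^2 + y^2 from add_comm _ _] at h
    rw [Real.norm_eq_abs]
    exact h
  have hint : ‖∫ s in (0:ℝ)..(2*π), (G s - H s)‖ ≤ K * (x^2+y^2) * |2*π - 0| :=
    intervalIntegral.norm_integral_le_of_norm_le_const hpt
  rw [intervalIntegral.integral_sub hGi hHi] at hint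
  rw [Real.norm_eq_abs, sub_zero, abs_of_pos hπ] at hint
  have hsplit : (A / (2 * π)) * (∫ s in (0:ℝ)..(2*π), G s) - A*(1-α)*y
      = (A / (2 * π)) * ((∫ s in (0:ℝ)..(2*π), G s) - (∫ s in (0:ℝ)..(2*π), H s)) := by
    rw [hHval]; field_simp
  rw [hsplit, abs_mul, abs_of_pos (by positivity : (0:ℝ) < A / (2*π))]
  calc A / (2*π) * |(∫ s in (0:ℝ)..(2*π), G s) - (∫ s in (0:ℝ)..(2*π), H s)|
      ≤ A / (2*π) * (K * (x^2+y^2) * (2*π)) := by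
        apply mul_le_mul_of_nonneg_left hint (by positivity)
    _ = A * K * (x^2+y^2) := by field_simp

set_option maxHeartbeats 1000000 in
lemma key_alg (k m C₃ ρ₀ lam a : ℝ) (hk : 0 < k) (hm : 0 < m) (hC : 0 < C₃)
    (hρ0 : 0 < ρ₀) (hρa : C₃*ρ₀ ≤ k/4) (hρb : 2*(k+1)*(C₃*ρ₀) ≤ k*m/2)
    (ha : a = (k^2+2*m)/2) (hlam0 : 0 < lam) (hl1 : lam ≤ k/4)
    (hl2 : lam*(2*k^2+2*m) ≤ k*m/2)
    (x vx y vy F1 F2 : ℝ)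
    (hP : x^2 + y^2 ≤ ρ₀^2)
    (hRa : |F1 + m*x| ≤ C₃*(x^2+y^2))
    (hRb : |F2 + m*y| ≤ C₃*(x^2+y^2)) :
    a*(2*x*vx + 2*y*vy) + k*(vx*vx + x*(F1 - k*vx) + (vy*vy + y*(F2 - k*vy)))
      + (2*vx*(F1 - k*vx) + 2*vy*(F2 - k*vy))
      + 2*lam*(a*(x^2+y^2) + k*(x*vx+y*vy) + (vx^2+vy^2)) ≤ 0 := by
  have hP0 : (0:ℝ) ≤ x^2 + y^2 := by positivity
  have hQ0 : (0:ℝ) ≤ vx^2 + vy^2 := by positivity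
  set R1 := F1 + m*x with hR1def
  set R2 := F2 + m*y with hR2def
  have hF1 : F1 = R1 - m*x := by rw [hR1def]; ring
  have hF2 : F2 = R2 - m*y := by rw [hR2def]; ring
  rw [hF1, hF2]
  -- |x| ≤ ρ₀ etc.
  have hxa : |x| ≤ ρ₀ := by
    rw [← Real.sqrt_sq hρ0.le, ← Real.sqrt_sq_eq_abs]
    exact Real.sqrt_le_sqrt (by nlinarith [sq_nonneg y])
  have hya : |y| ≤ ρ₀ := by
    rw [← Real.sqrt_sq hρ0.le, ← Real.sqrt_sq_eq_abs]
    exact Real.sqrt_le_sqrt (by nlinarith [sq_nonneg x])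
  -- b1, b2
  have b1 : x*R1 ≤ ρ₀*(C₃*(x^2+y^2)) := by
    calc x*R1 ≤ |x*R1| := le_abs_self _
      _ = |x| * |R1| := abs_mul _ _
      _ ≤ ρ₀*(C₃*(x^2+y^2)) :=
        mul_le_mul hxa hRa (abs_nonneg _) hρ0.le
  have b2 : y*R2 ≤ ρ₀*(C₃*(x^2+y^2)) := by
    calc y*R2 ≤ |y*R2| := le_abs_self _
      _ = |y| * |R2| := abs_mul _ _
      _ ≤ ρ₀*(C₃*(x^2+y^2)) :=
        mul_le_mul hya hRb (abs_nonneg _) hρ0.le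
  -- b3, b4
  set u := Real.sqrt (x^2+y^2) with hudef
  have hu2 : u^2 = x^2+y^2 := Real.sq_sqrt hP0
  have hu0 : 0 ≤ u := Real.sqrt_nonneg _
  have huρ : u ≤ ρ₀ := by
    rw [hudef, ← Real.sqrt_sq hρ0.le]
    exact Real.sqrt_le_sqrt hP
  have key3 : ∀ v R : ℝ, |R| ≤ C₃*(x^2+y^2) → 2*v*R ≤ C₃*(ρ₀*(v^2+(x^2+y^2))) := by
    intro v R hR
    have e1 : 2*v*R ≤ 2*(|v| * |R|) := by
      rw [← abs_mul]
      calc 2*v*R = 2*(v*R) := by ring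
        _ ≤ 2*|v*R| := by linarith [le_abs_self (v*R)]
    have e2 : 2*(|v| * |R|) ≤ 2*(|v| * (C₃*(x^2+y^2))) := by
      have := mul_le_mul_of_nonneg_left hR (abs_nonneg v)
      linarith
    have e3 : 2*(|v| * (x^2+y^2)) ≤ ρ₀*(v^2+(x^2+y^2)) := by
      rw [← hu2]
      nlinarith [mul_nonneg hu0 (sq_nonneg (|v| - u)),
        mul_nonneg (by positivity : (0:ℝ) ≤ v^2+u^2) (sub_nonneg.mpr huρ), sq_abs v, abs_nonneg v]
    have e4 : 2*(|v| * (C₃*(x^2+y^2))) = C₃*(2*(|v| * (x^2+y^2))) := by ring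
    have e5 : C₃*(2*(|v| * (x^2+y^2))) ≤ C₃*(ρ₀*(v^2+(x^2+y^2))) :=
      mul_le_mul_of_nonneg_left e3 hC.le
    linarith
  have b3 := key3 vx R1 hRa
  have b4 := key3 vy R2 hRb
  -- cross term
  have c3 : 2*lam*(k*(x*vx + y*vy)) ≤ lam*(k^2*(x^2+y^2) + (vx^2+vy^2)) := by
    have h1 : 2*(k*(x*vx + y*vy)) ≤ k^2*(x^2+y^2) + (vx^2+vy^2) := by
      nlinarith [sq_nonneg (k*x - vx), sq_nonneg (k*y - vy)]
    calc 2*lam*(k*(x*vx + y*vy)) = lam*(2*(k*(x*vx+y*vy))) := by ring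
      _ ≤ lam*(k^2*(x^2+y^2) + (vx^2+vy^2)) := mul_le_mul_of_nonneg_left h1 hlam0.le
  -- scaled constants
  have c1 : k*(x*R1 + y*R2) ≤ k*(2*(ρ₀*(C₃*(x^2+y^2)))) :=
    mul_le_mul_of_nonneg_left (by linarith) hk.le
  have c4 : lam*(2*k^2+2*m)*(x^2+y^2) ≤ (k*m/2)*(x^2+y^2) :=
    mul_le_mul_of_nonneg_right hl2 hP0
  have c5 : lam*(vx^2+vy^2) ≤ (k/4)*(vx^2+vy^2) :=
    mul_le_mul_of_nonneg_right hl1 hQ0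
  have c6 : (C₃*ρ₀)*(vx^2+vy^2) ≤ (k/4)*(vx^2+vy^2) :=
    mul_le_mul_of_nonneg_right hρa hQ0
  have c7 : (2*(k+1)*(C₃*ρ₀))*(x^2+y^2) ≤ (k*m/2)*(x^2+y^2) :=
    mul_le_mul_of_nonneg_right hρb hP0
  have hiden : a*(2*x*vx + 2*y*vy)
      + k*(vx*vx + x*((R1 - m*x) - k*vx) + (vy*vy + y*((R2 - m*y) - k*vy)))
      + (2*vx*((R1 - m*x) - k*vx) + 2*vy*((R2 - m*y) - k*vy))
      + 2*lam*(a*(x^2+y^2) + k*(x*vx+y*vy) + (vx^2+vy^2))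
      = -(k*(vx^2+vy^2)) - k*m*(x^2+y^2) + k*(x*R1 + y*R2)
        + (2*vx*R1 + 2*vy*R2) - 2*m*(x*vx+y*vy) + (k^2+2*m)*(x*vx+y*vy) - k^2*(x*vx+y*vy)
        + lam*(k^2+2*m)*(x^2+y^2) + 2*lam*(k*(x*vx+y*vy)) + 2*lam*(vx^2+vy^2) := by
    rw [ha]; ring
  rw [hiden]
  linarith [b3, b4, c1, c3, c4, c5, c6, c7]

set_option maxHeartbeats 2000000 in
/-- Lemma 1: For `A > 0`, `k > 0`, `α > 1`, the origin is an exponentially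
stable equilibrium of the averaged system `Ẋ̄ = f_av(X̄)`: `f_av(0) = 0`, and there are
`r, c, λ > 0` such that every solution with `‖X̄(0)‖ ≤ r` satisfies
`‖X̄(t)‖ ≤ c e^{−λt} ‖X̄(0)‖` for all `t ≥ 0`. -/
theorem averaged_system_origin_exponentially_stable
    (A k α : ℝ) (hA : 0 < A) (hk : 0 < k) (hα : 1 < α)
    (Φ₁ Φ₂ : ℝ → ℝ → ℝ)
    (hΦ₁ : ∀ x y : ℝ, x ^ 2 + y ^ 2 < 1 →
      Φ₁ x y = (A / (2 * π)) * ∫ s in (0 : ℝ)..(2 * π),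
        (x - Real.cos s) / ((x - Real.cos s) ^ 2 + (y - Real.sin s) ^ 2) ^ α)
    (hΦ₂ : ∀ x y : ℝ, x ^ 2 + y ^ 2 < 1 →
      Φ₂ x y = (A / (2 * π)) * ∫ s in (0 : ℝ)..(2 * π),
        (y - Real.sin s) / ((x - Real.cos s) ^ 2 + (y - Real.sin s) ^ 2) ^ α) :
    -- f_av(0) = 0
    (Φ₁ 0 0 = 0 ∧ Φ₂ 0 0 = 0) ∧
    -- exponential stability of the origin
    ∃ r > (0 : ℝ), ∃ c > (0 : ℝ), ∃ lam > (0 : ℝ),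
      ∀ x vx y vy : ℝ → ℝ,
        (∀ t ≥ (0 : ℝ),
          HasDerivAt x (vx t) t ∧
          HasDerivAt vx (Φ₁ (x t) (y t) - k * vx t) t ∧
          HasDerivAt y (vy t) t ∧
          HasDerivAt vy (Φ₂ (x t) (y t) - k * vy t) t) →
        Real.sqrt ((x 0) ^ 2 + (vx 0) ^ 2 + (y 0) ^ 2 + (vy 0) ^ 2) ≤ r →
        ∀ t ≥ (0 : ℝ),
          Real.sqrt ((x t) ^ 2 + (vx t) ^ 2 + (y t) ^ 2 + (vy t) ^ 2) ≤
            c * Real.exp (-lam * t) *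
              Real.sqrt ((x 0) ^ 2 + (vx 0) ^ 2 + (y 0) ^ 2 + (vy 0) ^ 2) := by
  have hα0 : (0:ℝ) < α := by linarith
  -- constants
  set m : ℝ := A*(α-1) with hm
  have hm0 : 0 < m := by rw [hm]; exact mul_pos hA (by linarith)
  set C₃ : ℝ := A*(11*(α*(α+1)*(4:ℝ)^(α+2)) + 4*α) with hC₃
  have hC₃0 : 0 < C₃ := by rw [hC₃]; positivity
  -- estimates on Φ
  have hest1 : ∀ x y : ℝ, x^2+y^2 ≤ 1/4 → |Φ₁ x y + m*x| ≤ C₃*(x^2+y^2) := by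
    intro x y hq
    have h := int_est1 A α hA hα x y hq
    rw [hΦ₁ x y (by linarith)]
    have e : A*(1-α)*x = -(m*x) := by rw [hm]; ring
    rw [← hC₃] at h
    rw [show (A / (2 * π)) * (∫ s in (0:ℝ)..(2*π),
        (x - Real.cos s) / ((x - Real.cos s) ^ 2 + (y - Real.sin s) ^ 2) ^ α) + m*x
      = (A / (2 * π)) * (∫ s in (0:ℝ)..(2*π),
        (x - Real.cos s) / ((x - Real.cos s) ^ 2 + (y - Real.sin s) ^ 2) ^ α) - A*(1-α)*x
      from by rw [e]; ring]
    exact h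
  have hest2 : ∀ x y : ℝ, x^2+y^2 ≤ 1/4 → |Φ₂ x y + m*y| ≤ C₃*(x^2+y^2) := by
    intro x y hq
    have h := int_est2 A α hA hα x y hq
    rw [hΦ₂ x y (by linarith)]
    have e : A*(1-α)*y = -(m*y) := by rw [hm]; ring
    rw [← hC₃] at h
    rw [show (A / (2 * π)) * (∫ s in (0:ℝ)..(2*π),
        (y - Real.sin s) / ((x - Real.cos s) ^ 2 + (y - Real.sin s) ^ 2) ^ α) + m*y
      = (A / (2 * π)) * (∫ s in (0:ℝ)..(2*π),
        (y - Real.sin s) / ((x - Real.cos s) ^ 2 + (y - Real.sin s) ^ 2) ^ α) - A*(1-α)*y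
      from by rw [e]; ring]
    exact h
  -- f_av(0)=0
  have hzero1 : Φ₁ 0 0 = 0 := by
    have h := hest1 0 0 (by norm_num)
    simp at h
    exact h
  have hzero2 : Φ₂ 0 0 = 0 := by
    have h := hest2 0 0 (by norm_num)
    simp at h
    exact h
  refine ⟨⟨hzero1, hzero2⟩, ?_⟩
  -- Lyapunov constants
  set ρ₀ : ℝ := min (1/2) (min (k/(4*C₃)) (k*m/(4*(k+1)*C₃))) with hρ₀
  have hρ₀0 : 0 < ρ₀ := by
    apply lt_min (by norm_num)
    apply lt_min (by positivity) (by positivity)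
  have hρ₀half : ρ₀ ≤ 1/2 := min_le_left _ _
  have hρa : C₃*ρ₀ ≤ k/4 := by
    have h1 : ρ₀ ≤ k/(4*C₃) := le_trans (min_le_right _ _) (min_le_left _ _)
    have := mul_le_mul_of_nonneg_left h1 hC₃0.le
    calc C₃*ρ₀ ≤ C₃*(k/(4*C₃)) := this
      _ = k/4 := by field_simp
  have hρb : 2*(k+1)*(C₃*ρ₀) ≤ k*m/2 := by
    have h1 : ρ₀ ≤ k*m/(4*(k+1)*C₃) := le_trans (min_le_right _ _) (min_le_right _ _)
    have h2 : C₃*ρ₀ ≤ C₃*(k*m/(4*(k+1)*C₃)) := mul_le_mul_of_nonneg_left h1 hC₃0.le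
    have h3 : C₃*(k*m/(4*(k+1)*C₃)) = k*m/(4*(k+1)) := by field_simp
    rw [h3] at h2
    have h4 : 2*(k+1)*(C₃*ρ₀) ≤ 2*(k+1)*(k*m/(4*(k+1))) :=
      mul_le_mul_of_nonneg_left h2 (by positivity)
    calc 2*(k+1)*(C₃*ρ₀) ≤ 2*(k+1)*(k*m/(4*(k+1))) := h4
      _ = k*m/2 := by field_simp; ring
  set lam : ℝ := min (k/4) (k*m/(4*(k^2+m))) with hlam
  have hlam0 : 0 < lam := lt_min (by positivity) (by positivity)
  have hl1 : lam ≤ k/4 := min_le_left _ _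
  have hl2 : lam*(2*k^2+2*m) ≤ k*m/2 := by
    have h1 : lam ≤ k*m/(4*(k^2+m)) := min_le_right _ _
    have h2 : lam*(2*k^2+2*m) ≤ (k*m/(4*(k^2+m)))*(2*k^2+2*m) :=
      mul_le_mul_of_nonneg_right h1 (by positivity)
    calc lam*(2*k^2+2*m) ≤ (k*m/(4*(k^2+m)))*(2*k^2+2*m) := h2
      _ = k*m/2 := by field_simp; ring
  set a : ℝ := (k^2+2*m)/2 with haa
  set β : ℝ := min m (1/2) with hβ
  have hβ0 : 0 < β := lt_min hm0 (by norm_num)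
  set B : ℝ := max (k^2+m) (3/2) with hB
  have hB0 : (0:ℝ) < B := lt_max_of_lt_right (by norm_num)
  have hβB : β ≤ B := le_trans (min_le_right _ _) (le_trans (by norm_num) (le_max_right _ _))
  set c : ℝ := Real.sqrt (B/β) with hc
  have hc0 : 0 < c := Real.sqrt_pos.mpr (by positivity)
  set r : ℝ := ρ₀ * Real.sqrt (β/(2*B)) with hr
  have hr0 : 0 < r := by
    apply mul_pos hρ₀0
    exact Real.sqrt_pos.mpr (by positivity)
  refine ⟨r, hr0, c, hc0, lam, hlam0, ?_⟩
  intro x vx y vy hsol h0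
  -- Lyapunov function
  set V : ℝ → ℝ := fun τ => a*(x τ^2 + y τ^2) + k*(x τ*vx τ + y τ*vy τ) + (vx τ^2 + vy τ^2) with hV
  set D : ℝ → ℝ := fun τ => a*(2*x τ*vx τ + 2*y τ*vy τ)
      + k*(vx τ*vx τ + x τ*(Φ₁ (x τ) (y τ) - k*vx τ) + (vy τ*vy τ + y τ*(Φ₂ (x τ) (y τ) - k*vy τ)))
      + (2*vx τ*(Φ₁ (x τ) (y τ) - k*vx τ) + 2*vy τ*(Φ₂ (x τ) (y τ) - k*vy τ)) with hD
  set W : ℝ → ℝ := fun τ => V τ * Real.exp (2*lam*τ) with hW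
  have hVd : ∀ s : ℝ, 0 ≤ s → HasDerivAt V (D s) s := by
    intro s hs
    obtain ⟨hx, hvx, hy, hvy⟩ := hsol s hs
    have h1 := ((hx.pow 2).add (hy.pow 2)).const_mul a
    have h2 := ((hx.mul hvx).add (hy.mul hvy)).const_mul k
    have h3 := (hvx.pow 2).add (hvy.pow 2)
    have hVder := (h1.add h2).add h3
    refine HasDerivAt.congr_deriv hVder ?_
    push_cast
    ring
  have hexp : ∀ s : ℝ, HasDerivAt (fun τ => Real.exp (2*lam*τ)) (2*lam*Real.exp (2*lam*s)) s := by
    intro s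
    have h1 : HasDerivAt (fun τ : ℝ => 2*lam*τ) (2*lam) s := by
      simpa using (hasDerivAt_id s).const_mul (2*lam)
    have h2 := (Real.hasDerivAt_exp (2*lam*s)).comp s h1
    refine HasDerivAt.congr_deriv h2 ?_
    ring
  have hWd : ∀ s : ℝ, 0 ≤ s →
      HasDerivAt W (D s * Real.exp (2*lam*s) + V s * (2*lam*Real.exp (2*lam*s))) s := by
    intro s hs
    exact (hVd s hs).mul (hexp s)
  -- decay of W where the orbit is in the small disk
  have hdecay : ∀ s : ℝ, 0 ≤ s → x s^2 + y s^2 ≤ ρ₀^2 → D s + 2*lam*(V s) ≤ 0 := by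
    intro s hs hball
    have hsmall : x s^2 + y s^2 ≤ 1/4 := by
      have h14 : ρ₀^2 ≤ (1/2:ℝ)^2 := pow_le_pow_left₀ hρ₀0.le hρ₀half 2
      have : ((1:ℝ)/2)^2 = 1/4 := by norm_num
      linarith only [hball, h14, this]
    have h := key_alg k m C₃ ρ₀ lam a hk hm0 hC₃0 hρ₀0 hρa hρb haa hlam0 hl1 hl2
      (x s) (vx s) (y s) (vy s) (Φ₁ (x s) (y s)) (Φ₂ (x s) (y s)) hball
      (hest1 (x s) (y s) hsmall) (hest2 (x s) (y s) hsmall)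
    calc D s + 2*lam*(V s) = a*(2*x s*vx s + 2*y s*vy s)
        + k*(vx s*vx s + x s*(Φ₁ (x s) (y s) - k*vx s) + (vy s*vy s + y s*(Φ₂ (x s) (y s) - k*vy s)))
        + (2*vx s*(Φ₁ (x s) (y s) - k*vx s) + 2*vy s*(Φ₂ (x s) (y s) - k*vy s))
        + 2*lam*(a*(x s^2+y s^2) + k*(x s*vx s+y s*vy s) + (vx s^2+vy s^2)) := by
          rw [hD, hV]
      _ ≤ 0 := h
  -- comparisons of V with the norm
  have hVlow : ∀ s : ℝ, β*(x s^2 + vx s^2 + y s^2 + vy s^2) ≤ V s := by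
    intro s
    have e1 : (0:ℝ) ≤ (m-β)*(x s^2+y s^2) :=
      mul_nonneg (by linarith [min_le_left m (1/2:ℝ)]) (by positivity)
    have e2 : (0:ℝ) ≤ (1/2-β)*(vx s^2+vy s^2) :=
      mul_nonneg (by linarith [min_le_right m (1/2:ℝ)]) (by positivity)
    have e3 := sq_nonneg (k*x s + vx s)
    have e4 := sq_nonneg (k*y s + vy s)
    rw [hV, haa]
    linarith only [e1, e2, e3, e4]
  have hVhigh : ∀ s : ℝ, V s ≤ B*(x s^2 + vx s^2 + y s^2 + vy s^2) := by
    intro s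
    have e1 : (0:ℝ) ≤ (B-(k^2+m))*(x s^2+y s^2) :=
      mul_nonneg (by linarith [le_max_left (k^2+m) (3/2:ℝ)]) (by positivity)
    have e2 : (0:ℝ) ≤ (B-3/2)*(vx s^2+vy s^2) :=
      mul_nonneg (by linarith [le_max_right (k^2+m) (3/2:ℝ)]) (by positivity)
    have e3 := sq_nonneg (k*x s - vx s)
    have e4 := sq_nonneg (k*y s - vy s)
    rw [hV, haa]
    linarith only [e1, e2, e3, e4]
  have hV0nn : ∀ s : ℝ, 0 ≤ V s := by
    intro s
    have h1 := hVlow s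
    have h2 : (0:ℝ) ≤ β*(x s^2 + vx s^2 + y s^2 + vy s^2) :=
      mul_nonneg hβ0.le (by positivity)
    linarith only [h1, h2]
  -- initial data
  have hN0 : (x 0)^2 + (vx 0)^2 + (y 0)^2 + (vy 0)^2 ≤ r^2 := by
    rw [← Real.sq_sqrt (by positivity : (0:ℝ) ≤ (x 0)^2 + (vx 0)^2 + (y 0)^2 + (vy 0)^2)]
    exact pow_le_pow_left₀ (Real.sqrt_nonneg _) h0 2
  have hrsq : r^2 = ρ₀^2 * (β/(2*B)) := by
    rw [hr, mul_pow, Real.sq_sqrt (by positivity)]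
  have hV0small : V 0 ≤ β*ρ₀^2/2 := by
    calc V 0 ≤ B*((x 0)^2 + (vx 0)^2 + (y 0)^2 + (vy 0)^2) := hVhigh 0
      _ ≤ B*r^2 := mul_le_mul_of_nonneg_left hN0 hB0.le
      _ = β*ρ₀^2/2 := by rw [hrsq]; field_simp
  -- continuity of the radius
  have hPcont : ∀ s : ℝ, 0 ≤ s → ContinuousAt (fun τ => x τ^2 + y τ^2) s := by
    intro s hs
    obtain ⟨hx, _, hy, _⟩ := hsol s hs
    exact (hx.continuousAt.pow 2).add (hy.continuousAt.pow 2)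
  -- monotonicity of W on intervals within the disk
  have hmono : ∀ T : ℝ, 0 ≤ T → (∀ s ∈ Icc (0:ℝ) T, x s^2 + y s^2 ≤ ρ₀^2) → W T ≤ W 0 := by
    intro T hT hball
    have hanti : AntitoneOn W (Icc (0:ℝ) T) := by
      apply antitoneOn_of_deriv_nonpos (convex_Icc _ _)
      · intro s hs
        exact ((hWd s hs.1).continuousAt).continuousWithinAt
      · intro s hs
        rw [interior_Icc] at hs
        exact ((hWd s hs.1.le).differentiableAt).differentiableWithinAt
      · intro s hs
        rw [interior_Icc] at hs
        rw [(hWd s hs.1.le).deriv]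
        have hd := hdecay s hs.1.le (hball s ⟨hs.1.le, hs.2.le⟩)
        have heq : D s * Real.exp (2*lam*s) + V s * (2*lam*Real.exp (2*lam*s))
            = (D s + 2*lam*(V s)) * Real.exp (2*lam*s) := by ring
        rw [heq]
        exact mul_nonpos_of_nonpos_of_nonneg hd (Real.exp_nonneg _)
    exact hanti (left_mem_Icc.mpr hT) (right_mem_Icc.mpr hT) hT
  -- invariance of the disk
  have hinv : ∀ t : ℝ, 0 ≤ t → x t^2 + y t^2 ≤ ρ₀^2 := by
    intro t ht
    by_contra hcon
    push_neg at hcon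
    set E : Set ℝ := {s : ℝ | 0 ≤ s ∧ ρ₀^2 < x s^2 + y s^2} with hE
    have hEt : t ∈ E := ⟨ht, hcon⟩
    have hEne : E.Nonempty := ⟨t, hEt⟩
    have hbdd : BddBelow E := ⟨0, fun s hs => hs.1⟩
    set u : ℝ := sInf E with hu
    have hu0 : 0 ≤ u := le_csInf hEne (fun s hs => hs.1)
    have hlt : ∀ s : ℝ, 0 ≤ s → s < u → x s^2 + y s^2 ≤ ρ₀^2 := by
      intro s hs hsu
      by_contra hcs
      push_neg at hcs
      exact absurd (csInf_le hbdd ⟨hs, hcs⟩) (not_le.mpr hsu)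
    -- the disk bound at time 0
    have hP0 : x 0^2 + y 0^2 ≤ ρ₀^2/2 := by
      have h1 : x 0^2 + y 0^2 ≤ r^2 := by
        linarith only [sq_nonneg (vx 0), sq_nonneg (vy 0), hN0]
      have h2 : r^2 ≤ ρ₀^2/2 := by
        rw [hrsq]
        have hhalf : β/(2*B) ≤ 1/2 := by
          rw [div_le_div_iff₀ (by positivity) (by norm_num)]
          linarith only [hβB, hβ0, hB0]
        have := mul_le_mul_of_nonneg_left hhalf (sq_nonneg ρ₀)
        linarith only [this]
      linarith
    -- P u ≤ ρ₀^2
    have hPu : x u^2 + y u^2 ≤ ρ₀^2 := by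
      by_contra hBc
      push_neg at hBc
      have hune : u ≠ 0 := by
        intro h
        rw [h] at hBc
        have := pow_pos hρ₀0 2
        linarith only [hP0, hBc, this]
      have hupos : 0 < u := lt_of_le_of_ne hu0 (Ne.symm hune)
      have hev : (fun τ => x τ^2 + y τ^2) ⁻¹' (Ioi (ρ₀^2)) ∈ nhds u :=
        (hPcont u hu0) (Ioi_mem_nhds hBc)
      obtain ⟨δ, hδ0, hball⟩ := Metric.mem_nhds_iff.mp hev
      set s₀ : ℝ := u - min δ u / 2 with hs₀
      have hmin0 : 0 < min δ u := lt_min hδ0 hupos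
      have hs₀0 : 0 ≤ s₀ := by
        rw [hs₀]
        have : min δ u ≤ u := min_le_right _ _
        linarith
      have hs₀u : s₀ < u := by rw [hs₀]; linarith
      have hs₀ball : s₀ ∈ Metric.ball u δ := by
        rw [Metric.mem_ball, Real.dist_eq, hs₀]
        rw [abs_of_nonpos (by linarith : u - min δ u / 2 - u ≤ 0)]
        have : min δ u ≤ δ := min_le_left _ _
        linarith
      have := hball hs₀ball
      rw [Set.mem_preimage, Set.mem_Ioi] at this
      exact absurd (csInf_le hbdd ⟨hs₀0, this⟩) (not_le.mpr hs₀u)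
    -- apply decay up to u
    have hIccu : ∀ s ∈ Icc (0:ℝ) u, x s^2 + y s^2 ≤ ρ₀^2 := by
      intro s hs
      rcases lt_or_eq_of_le hs.2 with h | h
      · exact hlt s hs.1 h
      · rw [h]; exact hPu
    have hWu : W u ≤ W 0 := hmono u hu0 hIccu
    have hVu : V u ≤ V 0 := by
      have h1 : W u = V u * Real.exp (2*lam*u) := rfl
      have h2 : W 0 = V 0 * Real.exp (2*lam*0) := rfl
      rw [h1, h2] at hWu
      have h3 : Real.exp (2*lam*0) = 1 := by norm_num
      rw [h3, mul_one] at hWu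
      have h4 : (1:ℝ) ≤ Real.exp (2*lam*u) := by
        rw [← Real.exp_zero]
        exact Real.exp_le_exp.mpr (by positivity)
      have h5 : V u ≤ V u * Real.exp (2*lam*u) := le_mul_of_one_le_right (hV0nn u) h4
      linarith only [h5, hWu]
    -- deduce P u strictly small
    have hPusmall : x u^2 + y u^2 ≤ ρ₀^2/2 := by
      have h1 : β*(x u^2 + vx u^2 + y u^2 + vy u^2) ≤ β*ρ₀^2/2 :=
        le_trans (hVlow u) (le_trans hVu hV0small)
      have h2 : β*(x u^2 + y u^2) ≤ β*(ρ₀^2/2) := by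
        have h2a : (0:ℝ) ≤ β*(vx u^2) := mul_nonneg hβ0.le (sq_nonneg _)
        have h2b : (0:ℝ) ≤ β*(vy u^2) := mul_nonneg hβ0.le (sq_nonneg _)
        linarith only [h1, h2a, h2b]
      exact le_of_mul_le_mul_left (by linarith) hβ0
    -- contradiction via continuity from the right
    have hPulittle : x u^2 + y u^2 < ρ₀^2 := by
      have := pow_pos hρ₀0 2
      linarith only [hPusmall, this]
    have hev : (fun τ => x τ^2 + y τ^2) ⁻¹' (Iio (ρ₀^2)) ∈ nhds u :=
      (hPcont u hu0) (Iio_mem_nhds hPulittle)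
    obtain ⟨δ, hδ0, hball⟩ := Metric.mem_nhds_iff.mp hev
    obtain ⟨s₁, hs₁E, hs₁lt⟩ := exists_lt_of_csInf_lt hEne (lt_add_of_pos_right u hδ0)
    have hus₁ : u ≤ s₁ := csInf_le hbdd hs₁E
    have hs₁ball : s₁ ∈ Metric.ball u δ := by
      rw [Metric.mem_ball, Real.dist_eq, abs_of_nonneg (by linarith : (0:ℝ) ≤ s₁ - u)]
      linarith
    have := hball hs₁ball
    rw [Set.mem_preimage, Set.mem_Iio] at this
    exact absurd hs₁E.2 (not_lt.mpr this.le)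
  -- final exponential bound
  intro t ht
  have hWt : W t ≤ W 0 := hmono t ht (fun s hs => hinv s hs.1)
  have hVt : V t ≤ V 0 * Real.exp (-(2*lam*t)) := by
    have h1 : V t * Real.exp (2*lam*t) ≤ V 0 := by
      have e2 : W 0 = V 0 * Real.exp (2*lam*0) := rfl
      have e3 : Real.exp (2*lam*0) = 1 := by norm_num
      calc V t * Real.exp (2*lam*t) = W t := rfl
        _ ≤ W 0 := hWt
        _ = V 0 := by rw [e2, e3, mul_one]
    have h2 : (0:ℝ) < Real.exp (2*lam*t) := Real.exp_pos _
    rw [Real.exp_neg, ← div_eq_mul_inv, le_div_iff₀ h2]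
    exact h1
  have hchain : β*((x t)^2+(vx t)^2+(y t)^2+(vy t)^2)
      ≤ B*((x 0)^2+(vx 0)^2+(y 0)^2+(vy 0)^2)*Real.exp (-(2*lam*t)) := by
    calc β*((x t)^2+(vx t)^2+(y t)^2+(vy t)^2) ≤ V t := hVlow t
      _ ≤ V 0 * Real.exp (-(2*lam*t)) := hVt
      _ ≤ B*((x 0)^2+(vx 0)^2+(y 0)^2+(vy 0)^2)*Real.exp (-(2*lam*t)) :=
        mul_le_mul_of_nonneg_right (hVhigh 0) (Real.exp_nonneg _)
  have hsq : (c*Real.exp (-lam*t))^2 = (B/β)*Real.exp (-(2*lam*t)) := by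
    rw [mul_pow, hc, Real.sq_sqrt (by positivity)]
    have e1 : (Real.exp (-lam*t))^2 = Real.exp (-(2*lam*t)) := by
      rw [sq, ← Real.exp_add]
      congr 1
      ring
    rw [e1]
  have hfin : (x t)^2+(vx t)^2+(y t)^2+(vy t)^2
      ≤ (c*Real.exp (-lam*t))^2 * ((x 0)^2+(vx 0)^2+(y 0)^2+(vy 0)^2) := by
    rw [hsq, div_mul_eq_mul_div, div_mul_eq_mul_div, le_div_iff₀ hβ0]
    calc ((x t)^2+(vx t)^2+(y t)^2+(vy t)^2) * β
        = β*((x t)^2+(vx t)^2+(y t)^2+(vy t)^2) := by ring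
      _ ≤ B*((x 0)^2+(vx 0)^2+(y 0)^2+(vy 0)^2)*Real.exp (-(2*lam*t)) := hchain
      _ = B * Real.exp (-(2*lam*t)) * ((x 0)^2+(vx 0)^2+(y 0)^2+(vy 0)^2) := by ring
  calc Real.sqrt ((x t)^2+(vx t)^2+(y t)^2+(vy t)^2)
      ≤ Real.sqrt ((c*Real.exp (-lam*t))^2 * ((x 0)^2+(vx 0)^2+(y 0)^2+(vy 0)^2)) :=
        Real.sqrt_le_sqrt hfin
    _ = c * Real.exp (-lam*t) * Real.sqrt ((x 0)^2+(vx 0)^2+(y 0)^2+(vy 0)^2) := by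
        rw [Real.sqrt_mul (sq_nonneg _), Real.sqrt_sq (by positivity)]
end

section
/- Let A > 0 and α > 0. The averaged force map Φ = (Φ₁, Φ₂), defined on the open unit disc {(x,y) ∈ ℝ² : x² + y² < 1}, is differentiable at the origin with ∂Φ₁/∂x(0,0) = −A(α−1), ∂Φ₁/∂y(0,0) = 0, ∂Φ₂/∂x(0,0) = 0, and ∂Φ₂/∂y(0,0) = −A(α−1); that is, the Fréchet derivative of Φ at (0,0) is −A(α−1) times the identity on ℝ². Consequently, the Jacobian of the averaged vector field f_av at the origin of ℝ⁴ is the block-diagonal matrix with two copies of the 2×2 block [[0, 1], [−A(α−1), −k]]. -/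
open Real Set MeasureTheory intervalIntegral Metric

noncomputable section AvgAux

/-- squared distance from `p` to the point `(cos s, sin s)` -/
def Nf (p : ℝ × ℝ) (s : ℝ) : ℝ := (p.1 - Real.cos s) ^ 2 + (p.2 - Real.sin s) ^ 2

/-- the vector integrand -/
def Ff (α : ℝ) (p : ℝ × ℝ) (s : ℝ) : ℝ × ℝ :=
  Nf p s ^ (-α) • (p - (Real.cos s, Real.sin s))

/-- derivative of `Nf · s` at `p` -/
def NDf (p : ℝ × ℝ) (s : ℝ) : (ℝ × ℝ) →L[ℝ] ℝ :=
  (2 * (p.1 - Real.cos s)) • ContinuousLinearMap.fst ℝ ℝ ℝ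
    + (2 * (p.2 - Real.sin s)) • ContinuousLinearMap.snd ℝ ℝ ℝ

/-- derivative of `Ff α · s` at `p` -/
def Df (α : ℝ) (p : ℝ × ℝ) (s : ℝ) : (ℝ × ℝ) →L[ℝ] ℝ × ℝ :=
  Nf p s ^ (-α) • ContinuousLinearMap.id ℝ (ℝ × ℝ)
    + ((-α * Nf p s ^ (-α - 1)) • NDf p s).smulRight (p - (Real.cos s, Real.sin s))

lemma hasFDerivAt_Ff (α : ℝ) {p : ℝ × ℝ} {s : ℝ} (h0 : Nf p s ≠ 0) :
    HasFDerivAt (fun q => Ff α q s) (Df α p s) p := by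
  have h1 : HasFDerivAt (fun q : ℝ × ℝ => q.1 - Real.cos s)
      (ContinuousLinearMap.fst ℝ ℝ ℝ) p := hasFDerivAt_fst.sub_const _
  have h2 : HasFDerivAt (fun q : ℝ × ℝ => q.2 - Real.sin s)
      (ContinuousLinearMap.snd ℝ ℝ ℝ) p := hasFDerivAt_snd.sub_const _
  have hN : HasFDerivAt (fun q => Nf q s) (NDf p s) p := by
    have h := (h1.mul h1).add (h2.mul h2)
    have hfun : (fun q : ℝ × ℝ => (q.1 - Real.cos s) * (q.1 - Real.cos s)
        + (q.2 - Real.sin s) * (q.2 - Real.sin s)) = fun q => Nf q s := by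
      funext q; simp only [Nf]; ring
    change HasFDerivAt (fun q : ℝ × ℝ => (q.1 - Real.cos s) * (q.1 - Real.cos s)
        + (q.2 - Real.sin s) * (q.2 - Real.sin s)) _ p at h
    rw [hfun] at h
    have heq : (p.1 - Real.cos s) • ContinuousLinearMap.fst ℝ ℝ ℝ
        + (p.1 - Real.cos s) • ContinuousLinearMap.fst ℝ ℝ ℝ
        + ((p.2 - Real.sin s) • ContinuousLinearMap.snd ℝ ℝ ℝ
          + (p.2 - Real.sin s) • ContinuousLinearMap.snd ℝ ℝ ℝ) = NDf p s := by
      refine ContinuousLinearMap.ext fun v => ?_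
      simp only [NDf, ContinuousLinearMap.add_apply, ContinuousLinearMap.smul_apply,
        ContinuousLinearMap.coe_fst', ContinuousLinearMap.coe_snd', smul_eq_mul]
      ring
    rwa [heq] at h
  have hr : HasDerivAt (fun t : ℝ => t ^ (-α)) (-α * Nf p s ^ (-α - 1)) (Nf p s) :=
    Real.hasDerivAt_rpow_const (Or.inl h0)
  have hNr := hr.comp_hasFDerivAt p hN
  have hq : HasFDerivAt (fun q : ℝ × ℝ => q - (Real.cos s, Real.sin s))
      (ContinuousLinearMap.id ℝ (ℝ × ℝ)) p := (hasFDerivAt_id p).sub_const _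
  exact hNr.smul hq


lemma Nf_zero (s : ℝ) : Nf 0 s = 1 := by
  simp [Nf]

/-- matrix-unit continuous linear maps on ℝ × ℝ -/
def M11 : (ℝ × ℝ) →L[ℝ] ℝ × ℝ := (ContinuousLinearMap.fst ℝ ℝ ℝ).smulRight ((1 : ℝ), (0 : ℝ))
def M12 : (ℝ × ℝ) →L[ℝ] ℝ × ℝ := (ContinuousLinearMap.snd ℝ ℝ ℝ).smulRight ((1 : ℝ), (0 : ℝ))
def M21 : (ℝ × ℝ) →L[ℝ] ℝ × ℝ := (ContinuousLinearMap.fst ℝ ℝ ℝ).smulRight ((0 : ℝ), (1 : ℝ))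
def M22 : (ℝ × ℝ) →L[ℝ] ℝ × ℝ := (ContinuousLinearMap.snd ℝ ℝ ℝ).smulRight ((0 : ℝ), (1 : ℝ))

lemma Df_zero (α : ℝ) (s : ℝ) :
    Df α 0 s = ContinuousLinearMap.id ℝ (ℝ × ℝ)
      + (-(2 * α) * (Real.cos s * Real.cos s)) • M11
      + (-(2 * α) * (Real.sin s * Real.cos s)) • M12
      + (-(2 * α) * (Real.cos s * Real.sin s)) • M21
      + (-(2 * α) * (Real.sin s * Real.sin s)) • M22 := by
  refine ContinuousLinearMap.ext fun v => ?_
  have h1 : Nf 0 s = 1 := Nf_zero s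
  apply Prod.ext <;>
  · simp only [Df, NDf, M11, M12, M21, M22, h1, Real.one_rpow,
      ContinuousLinearMap.add_apply, ContinuousLinearMap.smul_apply,
      ContinuousLinearMap.smulRight_apply, ContinuousLinearMap.coe_fst',
      ContinuousLinearMap.coe_snd', ContinuousLinearMap.coe_id', id_eq,
      Prod.fst_zero, Prod.snd_zero, Prod.smul_fst, Prod.smul_snd,
      Prod.fst_sub, Prod.snd_sub, Prod.fst_add, Prod.snd_add, smul_eq_mul,
      Prod.mk_sub_mk, zero_sub, Prod.fst_neg, Prod.snd_neg]
    ring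

lemma integral_Df_zero (α : ℝ) :
    (∫ s in (0:ℝ)..(2 * π), Df α 0 s)
      = (2 * π * (1 - α)) • ContinuousLinearMap.id ℝ (ℝ × ℝ) := by
  have hc2 : Continuous fun s : ℝ => (-(2 * α) * (Real.cos s * Real.cos s)) • M11 :=
    (continuous_const.mul (Real.continuous_cos.mul Real.continuous_cos)).smul continuous_const
  have hc3 : Continuous fun s : ℝ => (-(2 * α) * (Real.sin s * Real.cos s)) • M12 :=
    (continuous_const.mul (Real.continuous_sin.mul Real.continuous_cos)).smul continuous_const
  have hc4 : Continuous fun s : ℝ => (-(2 * α) * (Real.cos s * Real.sin s)) • M21 :=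
    (continuous_const.mul (Real.continuous_cos.mul Real.continuous_sin)).smul continuous_const
  have hc5 : Continuous fun s : ℝ => (-(2 * α) * (Real.sin s * Real.sin s)) • M22 :=
    (continuous_const.mul (Real.continuous_sin.mul Real.continuous_sin)).smul continuous_const
  have h2 : (∫ s in (0:ℝ)..(2 * π), (-(2 * α) * (Real.cos s * Real.cos s)) • M11)
      = (-(2 * α) * π) • M11 := by
    rw [intervalIntegral.integral_smul_const, intervalIntegral.integral_const_mul]
    congr 1
    have : (∫ s in (0:ℝ)..(2 * π), Real.cos s * Real.cos s)
        = ∫ s in (0:ℝ)..(2 * π), Real.cos s ^ 2 := by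
      congr 1; funext s; ring
    rw [this, integral_cos_sq]
    simp [Real.sin_two_pi, Real.cos_two_pi]
  have h3 : (∫ s in (0:ℝ)..(2 * π), (-(2 * α) * (Real.sin s * Real.cos s)) • M12)
      = (0 : (ℝ × ℝ) →L[ℝ] ℝ × ℝ) := by
    rw [intervalIntegral.integral_smul_const, intervalIntegral.integral_const_mul,
      integral_sin_mul_cos₁]
    simp [Real.sin_two_pi]
  have h4 : (∫ s in (0:ℝ)..(2 * π), (-(2 * α) * (Real.cos s * Real.sin s)) • M21)
      = (0 : (ℝ × ℝ) →L[ℝ] ℝ × ℝ) := by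
    have : (fun s => (-(2 * α) * (Real.cos s * Real.sin s)) • M21)
        = fun s => (-(2 * α) * (Real.sin s * Real.cos s)) • M21 := by
      funext s; ring_nf
    rw [this, intervalIntegral.integral_smul_const, intervalIntegral.integral_const_mul,
      integral_sin_mul_cos₁]
    simp [Real.sin_two_pi]
  have h5 : (∫ s in (0:ℝ)..(2 * π), (-(2 * α) * (Real.sin s * Real.sin s)) • M22)
      = (-(2 * α) * π) • M22 := by
    rw [intervalIntegral.integral_smul_const, intervalIntegral.integral_const_mul]
    congr 1
    have : (∫ s in (0:ℝ)..(2 * π), Real.sin s * Real.sin s)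
        = ∫ s in (0:ℝ)..(2 * π), Real.sin s ^ 2 := by
      congr 1; funext s; ring
    rw [this, integral_sin_sq]
    simp [Real.sin_two_pi, Real.cos_two_pi]
  have hre : (fun s => Df α 0 s) = fun s => ContinuousLinearMap.id ℝ (ℝ × ℝ)
      + (-(2 * α) * (Real.cos s * Real.cos s)) • M11
      + (-(2 * α) * (Real.sin s * Real.cos s)) • M12
      + (-(2 * α) * (Real.cos s * Real.sin s)) • M21
      + (-(2 * α) * (Real.sin s * Real.sin s)) • M22 := funext fun s => Df_zero α s
  have hi2 : IntervalIntegrable (fun s : ℝ => (-(2 * α) * (Real.cos s * Real.cos s)) • M11)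
      MeasureTheory.volume (0:ℝ) (2 * π) := hc2.intervalIntegrable _ _
  have hi3 : IntervalIntegrable (fun s : ℝ => (-(2 * α) * (Real.sin s * Real.cos s)) • M12)
      MeasureTheory.volume (0:ℝ) (2 * π) := hc3.intervalIntegrable _ _
  have hi4 : IntervalIntegrable (fun s : ℝ => (-(2 * α) * (Real.cos s * Real.sin s)) • M21)
      MeasureTheory.volume (0:ℝ) (2 * π) := hc4.intervalIntegrable _ _
  have hi5 : IntervalIntegrable (fun s : ℝ => (-(2 * α) * (Real.sin s * Real.sin s)) • M22)
      MeasureTheory.volume (0:ℝ) (2 * π) := hc5.intervalIntegrable _ _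
  have hi1 : IntervalIntegrable (fun _ : ℝ => ContinuousLinearMap.id ℝ (ℝ × ℝ))
      MeasureTheory.volume (0:ℝ) (2 * π) := intervalIntegrable_const
  rw [hre, intervalIntegral.integral_add (((hi1.add hi2).add hi3).add hi4) hi5,
    intervalIntegral.integral_add ((hi1.add hi2).add hi3) hi4,
    intervalIntegral.integral_add (hi1.add hi2) hi3,
    intervalIntegral.integral_add hi1 hi2]
  rw [h2, h3, h4, h5, intervalIntegral.integral_const]
  refine ContinuousLinearMap.ext fun v => ?_
  apply Prod.ext <;>
  · simp only [M11, M22, ContinuousLinearMap.add_apply, ContinuousLinearMap.smul_apply,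
      ContinuousLinearMap.zero_apply, ContinuousLinearMap.smulRight_apply,
      ContinuousLinearMap.coe_fst', ContinuousLinearMap.coe_snd',
      ContinuousLinearMap.coe_id', id_eq, Prod.smul_fst, Prod.smul_snd,
      Prod.fst_add, Prod.snd_add, Prod.fst_zero, Prod.snd_zero, smul_eq_mul, sub_zero]
    ring


lemma Nf_lb {p : ℝ × ℝ} (hp : ‖p‖ < 1/8) (s : ℝ) : 1/2 ≤ Nf p s := by
  have h1 : |p.1| ≤ 1/8 := le_trans (by simpa [Real.norm_eq_abs] using norm_fst_le p) hp.le
  have h2 : |p.2| ≤ 1/8 := le_trans (by simpa [Real.norm_eq_abs] using norm_snd_le p) hp.le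
  have e1 : |p.1 * Real.cos s| ≤ 1/8 := by
    rw [abs_mul]
    calc |p.1| * |Real.cos s| ≤ (1/8) * 1 :=
          mul_le_mul h1 (Real.abs_cos_le_one s) (abs_nonneg _) (by norm_num)
      _ = 1/8 := by norm_num
  have e2 : |p.2 * Real.sin s| ≤ 1/8 := by
    rw [abs_mul]
    calc |p.2| * |Real.sin s| ≤ (1/8) * 1 :=
          mul_le_mul h2 (Real.abs_sin_le_one s) (abs_nonneg _) (by norm_num)
      _ = 1/8 := by norm_num
  have hc := Real.sin_sq_add_cos_sq s
  have hA := (abs_le.mp e1).2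
  have hB := (abs_le.mp e2).2
  unfold Nf
  nlinarith [sq_nonneg p.1, sq_nonneg p.2]

lemma Nf_pos_of_disc {p : ℝ × ℝ} (hp : p.1 ^ 2 + p.2 ^ 2 < 1) (s : ℝ) : Nf p s ≠ 0 := by
  intro h
  have hc := Real.sin_sq_add_cos_sq s
  have hs : (p.1 - Real.cos s) ^ 2 + (p.2 - Real.sin s) ^ 2 = 0 := by simpa [Nf] using h
  have ha : (p.1 - Real.cos s) ^ 2 = 0 := by
    nlinarith [sq_nonneg (p.1 - Real.cos s), sq_nonneg (p.2 - Real.sin s)]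
  have hb : (p.2 - Real.sin s) ^ 2 = 0 := by
    nlinarith [sq_nonneg (p.1 - Real.cos s), sq_nonneg (p.2 - Real.sin s)]
  have e1 : p.1 = Real.cos s := sub_eq_zero.mp (pow_eq_zero_iff two_ne_zero |>.mp ha)
  have e2 : p.2 = Real.sin s := sub_eq_zero.mp (pow_eq_zero_iff two_ne_zero |>.mp hb)
  rw [e1, e2] at hp
  nlinarith

lemma norm_Df_le {α : ℝ} (hα : 0 < α) {p : ℝ × ℝ} (s : ℝ) (hp : ‖p‖ < 1/8) :
    ‖Df α p s‖ ≤ 2 ^ α + 6 * α * 2 ^ (α + 1) := by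
  have hNlb : 1/2 ≤ Nf p s := Nf_lb hp s
  have hN0 : (0:ℝ) < Nf p s := lt_of_lt_of_le (by norm_num) hNlb
  have half_rpow : ∀ β : ℝ, ((1:ℝ)/2) ^ (-β) = 2 ^ β := by
    intro β
    rw [show (1/2 : ℝ) = 2⁻¹ by norm_num, Real.inv_rpow (by norm_num : (0:ℝ) ≤ 2),
      Real.rpow_neg (by norm_num : (0:ℝ) ≤ 2), inv_inv]
  have ha : Nf p s ^ (-α) ≤ 2 ^ α := by
    calc Nf p s ^ (-α) ≤ ((1:ℝ)/2) ^ (-α) :=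
          Real.rpow_le_rpow_of_nonpos (by norm_num) hNlb (neg_nonpos.mpr hα.le)
      _ = 2 ^ α := half_rpow α
  have hb : Nf p s ^ (-α - 1) ≤ 2 ^ (α + 1) := by
    calc Nf p s ^ (-α - 1) ≤ ((1:ℝ)/2) ^ (-α - 1) :=
          Real.rpow_le_rpow_of_nonpos (by norm_num) hNlb (by linarith)
      _ = ((1:ℝ)/2) ^ (-(α + 1)) := by ring_nf
      _ = 2 ^ (α + 1) := half_rpow (α + 1)
  have h1 : |p.1| ≤ 1/8 := le_trans (by simpa [Real.norm_eq_abs] using norm_fst_le p) hp.le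
  have h2 : |p.2| ≤ 1/8 := le_trans (by simpa [Real.norm_eq_abs] using norm_snd_le p) hp.le
  have hq1 : |p.1 - Real.cos s| ≤ 9/8 := by
    have := Real.abs_cos_le_one s
    have := abs_sub_abs_le_abs_sub p.1 (Real.cos s)
    calc |p.1 - Real.cos s| ≤ |p.1| + |Real.cos s| := abs_sub p.1 (Real.cos s)
      _ ≤ 9/8 := by linarith [Real.abs_cos_le_one s]
  have hq2 : |p.2 - Real.sin s| ≤ 9/8 := by
    calc |p.2 - Real.sin s| ≤ |p.2| + |Real.sin s| := abs_sub p.2 (Real.sin s)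
      _ ≤ 9/8 := by linarith [Real.abs_sin_le_one s]
  have hNDf : ‖NDf p s‖ ≤ 9/2 := by
    unfold NDf
    refine le_trans (norm_add_le _ _) ?_
    have e1 : ‖(2 * (p.1 - Real.cos s)) • ContinuousLinearMap.fst ℝ ℝ ℝ‖ ≤ 9/4 := by
      rw [norm_smul (2 * (p.1 - Real.cos s)) (ContinuousLinearMap.fst ℝ ℝ ℝ), Real.norm_eq_abs, abs_mul, abs_two]
      calc 2 * |p.1 - Real.cos s| * ‖ContinuousLinearMap.fst ℝ ℝ ℝ‖
          ≤ 2 * (9/8) * 1 := by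
            refine mul_le_mul ?_ (ContinuousLinearMap.norm_fst_le ℝ ℝ ℝ) (norm_nonneg _) (by norm_num)
            linarith
        _ = 9/4 := by norm_num
    have e2 : ‖(2 * (p.2 - Real.sin s)) • ContinuousLinearMap.snd ℝ ℝ ℝ‖ ≤ 9/4 := by
      rw [norm_smul (2 * (p.2 - Real.sin s)) (ContinuousLinearMap.snd ℝ ℝ ℝ), Real.norm_eq_abs, abs_mul, abs_two]
      calc 2 * |p.2 - Real.sin s| * ‖ContinuousLinearMap.snd ℝ ℝ ℝ‖
          ≤ 2 * (9/8) * 1 := by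
            refine mul_le_mul ?_ (ContinuousLinearMap.norm_snd_le ℝ ℝ ℝ) (norm_nonneg _) (by norm_num)
            linarith
        _ = 9/4 := by norm_num
    linarith
  have hqn : ‖p - ((Real.cos s, Real.sin s) : ℝ × ℝ)‖ ≤ 9/8 := by
    refine le_trans (norm_sub_le _ _) ?_
    have hcn : ‖((Real.cos s, Real.sin s) : ℝ × ℝ)‖ ≤ 1 := by
      rw [Prod.norm_def]
      exact max_le (by simpa [Real.norm_eq_abs] using Real.abs_cos_le_one s)
        (by simpa [Real.norm_eq_abs] using Real.abs_sin_le_one s)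
    linarith [hp.le]
  unfold Df
  refine le_trans (norm_add_le _ _) ?_
  have t1 : ‖Nf p s ^ (-α) • ContinuousLinearMap.id ℝ (ℝ × ℝ)‖ ≤ 2 ^ α := by
    rw [norm_smul (Nf p s ^ (-α)) (ContinuousLinearMap.id ℝ (ℝ × ℝ)), Real.norm_eq_abs,
      abs_of_nonneg (Real.rpow_nonneg hN0.le _)]
    calc Nf p s ^ (-α) * ‖ContinuousLinearMap.id ℝ (ℝ × ℝ)‖
        ≤ Nf p s ^ (-α) * 1 :=
          mul_le_mul_of_nonneg_left ContinuousLinearMap.norm_id_le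
            (Real.rpow_nonneg hN0.le _)
      _ ≤ 2 ^ α := by rw [mul_one]; exact ha
  have t2 : ‖((-α * Nf p s ^ (-α - 1)) • NDf p s).smulRight
      (p - ((Real.cos s, Real.sin s) : ℝ × ℝ))‖ ≤ 6 * α * 2 ^ (α + 1) := by
    rw [ContinuousLinearMap.norm_smulRight_apply,
      norm_smul (-α * Nf p s ^ (-α - 1)) (NDf p s), Real.norm_eq_abs]
    have habs : |(-α * Nf p s ^ (-α - 1))| = α * Nf p s ^ (-α - 1) := by
      rw [abs_mul, abs_neg, abs_of_pos hα, abs_of_nonneg (Real.rpow_nonneg hN0.le _)]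
    rw [habs]
    have hb' : (0:ℝ) ≤ Nf p s ^ (-α - 1) := Real.rpow_nonneg hN0.le _
    have h2a : (0:ℝ) < 2 ^ (α + 1) := Real.rpow_pos_of_pos (by norm_num) _
    have c1 : α * Nf p s ^ (-α - 1) ≤ α * 2 ^ (α + 1) := mul_le_mul_of_nonneg_left hb hα.le
    have c2 : α * Nf p s ^ (-α - 1) * ‖NDf p s‖ ≤ α * 2 ^ (α + 1) * (9/2) :=
      mul_le_mul c1 hNDf (norm_nonneg _) (by positivity)
    have c3 : α * Nf p s ^ (-α - 1) * ‖NDf p s‖ * ‖p - ((Real.cos s, Real.sin s) : ℝ × ℝ)‖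
        ≤ α * 2 ^ (α + 1) * (9/2) * (9/8) :=
      mul_le_mul c2 hqn (norm_nonneg _) (by positivity)
    have c4 : α * 2 ^ (α + 1) * (9/2) * (9/8) ≤ 6 * α * 2 ^ (α + 1) := by
      nlinarith [mul_nonneg hα.le h2a.le]
    linarith
  linarith

lemma continuous_Ff (α : ℝ) {p : ℝ × ℝ} (h0 : ∀ s, Nf p s ≠ 0) :
    Continuous fun s => Ff α p s := by
  have hN : Continuous fun s => Nf p s := by
    unfold Nf; fun_prop
  exact (hN.rpow_const fun s => Or.inl (h0 s)).smul
    (continuous_const.sub (Real.continuous_cos.prodMk Real.continuous_sin))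


lemma continuous_Df_zero (α : ℝ) : Continuous fun s => Df α 0 s := by
  have hre : (fun s => Df α 0 s) = fun s => ContinuousLinearMap.id ℝ (ℝ × ℝ)
      + (-(2 * α) * (Real.cos s * Real.cos s)) • M11
      + (-(2 * α) * (Real.sin s * Real.cos s)) • M12
      + (-(2 * α) * (Real.cos s * Real.sin s)) • M21
      + (-(2 * α) * (Real.sin s * Real.sin s)) • M22 := funext fun s => Df_zero α s
  rw [hre]
  have hc2 : Continuous fun s : ℝ => (-(2 * α) * (Real.cos s * Real.cos s)) • M11 :=
    (continuous_const.mul (Real.continuous_cos.mul Real.continuous_cos)).smul continuous_const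
  have hc3 : Continuous fun s : ℝ => (-(2 * α) * (Real.sin s * Real.cos s)) • M12 :=
    (continuous_const.mul (Real.continuous_sin.mul Real.continuous_cos)).smul continuous_const
  have hc4 : Continuous fun s : ℝ => (-(2 * α) * (Real.cos s * Real.sin s)) • M21 :=
    (continuous_const.mul (Real.continuous_cos.mul Real.continuous_sin)).smul continuous_const
  have hc5 : Continuous fun s : ℝ => (-(2 * α) * (Real.sin s * Real.sin s)) • M22 :=
    (continuous_const.mul (Real.continuous_sin.mul Real.continuous_sin)).smul continuous_const
  exact (((continuous_const.add hc2).add hc3).add hc4).add hc5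

lemma Nf_ne_zero_of_small {p : ℝ × ℝ} (hp : ‖p‖ < 1/8) (s : ℝ) : Nf p s ≠ 0 := by
  have := Nf_lb hp s
  positivity

lemma hasFDerivAt_integral_Ff {α : ℝ} (hα : 0 < α) :
    HasFDerivAt (fun p : ℝ × ℝ => ∫ s in (0:ℝ)..(2 * π), Ff α p s)
      ((2 * π * (1 - α)) • ContinuousLinearMap.id ℝ (ℝ × ℝ)) 0 := by
  rw [← integral_Df_zero α]
  refine intervalIntegral.hasFDerivAt_integral_of_dominated_of_fderiv_le
    (F := fun p s => Ff α p s) (F' := fun p s => Df α p s)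
    (bound := fun _ => 2 ^ α + 6 * α * 2 ^ (α + 1)) (s := Metric.ball (0 : ℝ × ℝ) (1/8))
    (Metric.ball_mem_nhds _ (by norm_num)) ?_ ?_ ?_ ?_ ?_ ?_
  · filter_upwards [Metric.ball_mem_nhds (0 : ℝ × ℝ) (by norm_num : (0:ℝ) < 1/8)] with x hx
    have hx' : ‖x‖ < 1/8 := by simpa using mem_ball_zero_iff.mp hx
    exact (continuous_Ff α (Nf_ne_zero_of_small hx')).aestronglyMeasurable
  · exact (continuous_Ff α (Nf_ne_zero_of_small (by simp))).intervalIntegrable _ _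
  · exact (continuous_Df_zero α).aestronglyMeasurable
  · refine Filter.Eventually.of_forall fun t _ x hx => ?_
    exact norm_Df_le hα t (by simpa using mem_ball_zero_iff.mp hx)
  · exact intervalIntegrable_const
  · refine Filter.Eventually.of_forall fun t _ x hx => ?_
    exact hasFDerivAt_Ff α (Nf_ne_zero_of_small (by simpa using mem_ball_zero_iff.mp hx) t)

lemma Ff_fst (α : ℝ) (p : ℝ × ℝ) (s : ℝ) :
    (Ff α p s).1 = (p.1 - Real.cos s) / Nf p s ^ α := by
  have hN : (0:ℝ) ≤ Nf p s := add_nonneg (sq_nonneg _) (sq_nonneg _)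
  simp only [Ff, Prod.smul_fst, Prod.fst_sub, smul_eq_mul, Real.rpow_neg hN]
  ring

lemma Ff_snd (α : ℝ) (p : ℝ × ℝ) (s : ℝ) :
    (Ff α p s).2 = (p.2 - Real.sin s) / Nf p s ^ α := by
  have hN : (0:ℝ) ≤ Nf p s := add_nonneg (sq_nonneg _) (sq_nonneg _)
  simp only [Ff, Prod.smul_snd, Prod.snd_sub, smul_eq_mul, Real.rpow_neg hN]
  ring


lemma part1 {A α : ℝ} (hA : 0 < A) (hα : 0 < α) (Φ₁ Φ₂ : ℝ → ℝ → ℝ)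
    (hΦ₁ : ∀ x y : ℝ, x ^ 2 + y ^ 2 < 1 →
      Φ₁ x y = (A / (2 * π)) * ∫ s in (0 : ℝ)..(2 * π),
        (x - Real.cos s) / ((x - Real.cos s) ^ 2 + (y - Real.sin s) ^ 2) ^ α)
    (hΦ₂ : ∀ x y : ℝ, x ^ 2 + y ^ 2 < 1 →
      Φ₂ x y = (A / (2 * π)) * ∫ s in (0 : ℝ)..(2 * π),
        (y - Real.sin s) / ((x - Real.cos s) ^ 2 + (y - Real.sin s) ^ 2) ^ α) :
    HasFDerivAt (fun p : ℝ × ℝ => (Φ₁ p.1 p.2, Φ₂ p.1 p.2))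
      ((-(A * (α - 1))) • ContinuousLinearMap.id ℝ (ℝ × ℝ)) 0 := by
  have key := (hasFDerivAt_integral_Ff hα).const_smul (A / (2 * π))
  have hder : (A / (2 * π)) • ((2 * π * (1 - α)) • ContinuousLinearMap.id ℝ (ℝ × ℝ))
      = (-(A * (α - 1))) • ContinuousLinearMap.id ℝ (ℝ × ℝ) := by
    rw [smul_smul]
    congr 1
    have hπ : (π : ℝ) ≠ 0 := Real.pi_ne_zero
    field_simp
    ring
  rw [hder] at key
  refine key.congr_of_eventuallyEq ?_
  have hU : IsOpen {p : ℝ × ℝ | p.1 ^ 2 + p.2 ^ 2 < 1} := isOpen_lt (by fun_prop) continuous_const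
  filter_upwards [hU.mem_nhds
    (by norm_num : (0 : ℝ × ℝ) ∈ {p : ℝ × ℝ | p.1 ^ 2 + p.2 ^ 2 < 1})] with p hp
  have h0 : ∀ s, Nf p s ≠ 0 := Nf_pos_of_disc hp
  have hint : IntervalIntegrable (fun s => Ff α p s) MeasureTheory.volume 0 (2 * π) :=
    (continuous_Ff α h0).intervalIntegrable _ _
  have h1 := (ContinuousLinearMap.fst ℝ ℝ ℝ).intervalIntegral_comp_comm hint
  have h2 := (ContinuousLinearMap.snd ℝ ℝ ℝ).intervalIntegral_comp_comm hint
  simp only [ContinuousLinearMap.coe_fst', ContinuousLinearMap.coe_snd'] at h1 h2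
  have e1 : (fun s => (p.1 - Real.cos s) /
      ((p.1 - Real.cos s) ^ 2 + (p.2 - Real.sin s) ^ 2) ^ α) = fun s => (Ff α p s).1 := by
    funext s; rw [Ff_fst]; rfl
  have e2 : (fun s => (p.2 - Real.sin s) /
      ((p.1 - Real.cos s) ^ 2 + (p.2 - Real.sin s) ^ 2) ^ α) = fun s => (Ff α p s).2 := by
    funext s; rw [Ff_snd]; rfl
  apply Prod.ext
  · show Φ₁ p.1 p.2 = ((A / (2 * π)) • ∫ s in (0:ℝ)..(2 * π), Ff α p s).1
    rw [Prod.smul_fst, hΦ₁ p.1 p.2 hp, e1, h1, smul_eq_mul]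
  · show Φ₂ p.1 p.2 = ((A / (2 * π)) • ∫ s in (0:ℝ)..(2 * π), Ff α p s).2
    rw [Prod.smul_snd, hΦ₂ p.1 p.2 hp, e2, h2, smul_eq_mul]

end AvgAux

/-- The averaged force map `Φ = (Φ₁, Φ₂)` on the open unit disc is
differentiable at the origin with Fréchet derivative `−A(α−1)` times the identity on ℝ²;
consequently, the Jacobian of the averaged vector field `f_av` at the origin of ℝ⁴ is the
block-diagonal matrix with two copies of `[[0, 1], [−A(α−1), −k]]`. -/
theorem averaged_force_jacobian_at_origin
    (A α : ℝ) (hA : 0 < A) (hα : 0 < α) (k : ℝ)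
    (Φ₁ Φ₂ : ℝ → ℝ → ℝ)
    (hΦ₁ : ∀ x y : ℝ, x ^ 2 + y ^ 2 < 1 →
      Φ₁ x y = (A / (2 * π)) * ∫ s in (0 : ℝ)..(2 * π),
        (x - Real.cos s) / ((x - Real.cos s) ^ 2 + (y - Real.sin s) ^ 2) ^ α)
    (hΦ₂ : ∀ x y : ℝ, x ^ 2 + y ^ 2 < 1 →
      Φ₂ x y = (A / (2 * π)) * ∫ s in (0 : ℝ)..(2 * π),
        (y - Real.sin s) / ((x - Real.cos s) ^ 2 + (y - Real.sin s) ^ 2) ^ α)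
    (Φ : ℝ × ℝ → ℝ × ℝ) (hΦ : ∀ p : ℝ × ℝ, Φ p = (Φ₁ p.1 p.2, Φ₂ p.1 p.2))
    (fav : (Fin 4 → ℝ) → (Fin 4 → ℝ))
    (hfav : ∀ X : Fin 4 → ℝ,
      fav X = ![X 1, Φ₁ (X 0) (X 2) - k * X 1, X 3, Φ₂ (X 0) (X 2) - k * X 3]) :
    -- the Fréchet derivative of Φ at (0,0) is −A(α−1)·id on ℝ²
    HasFDerivAt Φ ((-(A * (α - 1))) • ContinuousLinearMap.id ℝ (ℝ × ℝ)) (0, 0) ∧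
    -- the Jacobian of f_av at the origin of ℝ⁴
    HasFDerivAt fav
      (LinearMap.toContinuousLinearMap (Matrix.toLin'
        (!![0, 1, 0, 0;
            -(A * (α - 1)), -k, 0, 0;
            0, 0, 0, 1;
            0, 0, -(A * (α - 1)), -k] : Matrix (Fin 4) (Fin 4) ℝ)))
      (0 : Fin 4 → ℝ) := by
  have hΦe : Φ = fun p : ℝ × ℝ => (Φ₁ p.1 p.2, Φ₂ p.1 p.2) := funext hΦ
  have hfave : fav = fun X : Fin 4 → ℝ =>
      ![X 1, Φ₁ (X 0) (X 2) - k * X 1, X 3, Φ₂ (X 0) (X 2) - k * X 3] := funext hfav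
  subst hΦe hfave
  have hD := part1 hA hα Φ₁ Φ₂ hΦ₁ hΦ₂
  refine ⟨hD, ?_⟩
  set M : Matrix (Fin 4) (Fin 4) ℝ :=
    !![0, 1, 0, 0;
       -(A * (α - 1)), -k, 0, 0;
       0, 0, 0, 1;
       0, 0, -(A * (α - 1)), -k] with hM
  set T : (Fin 4 → ℝ) →L[ℝ] (Fin 4 → ℝ) :=
    LinearMap.toContinuousLinearMap (Matrix.toLin' M) with hT
  have hTv : ∀ (v : Fin 4 → ℝ) (i : Fin 4), T v i = M.mulVec v i := fun v i => by
    simp [hT, Matrix.toLin'_apply]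
  set g : (Fin 4 → ℝ) →L[ℝ] ℝ × ℝ :=
    (ContinuousLinearMap.proj 0).prod (ContinuousLinearMap.proj 2) with hgdef
  have hgd : HasFDerivAt (fun X : Fin 4 → ℝ => ((X 0, X 2) : ℝ × ℝ)) g 0 := g.hasFDerivAt
  have hcomp : HasFDerivAt (fun X : Fin 4 → ℝ => (Φ₁ (X 0) (X 2), Φ₂ (X 0) (X 2)))
      ((((-(A * (α - 1))) • ContinuousLinearMap.id ℝ (ℝ × ℝ)) : (ℝ × ℝ) →L[ℝ] ℝ × ℝ).comp g)
      0 := hD.comp (f := fun X : Fin 4 → ℝ => ((X 0, X 2) : ℝ × ℝ)) 0 hgd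
  apply hasFDerivAt_pi'.2
  intro i
  fin_cases i
  · refine HasFDerivAt.congr_fderiv
      (hasFDerivAt_apply (1 : Fin 4) (0 : Fin 4 → ℝ)) ?_
    refine ContinuousLinearMap.ext fun v => ?_
    simp [hTv, Matrix.mulVec, dotProduct, Matrix.vecHead, Matrix.vecTail, Fin.sum_univ_four, hM]
  · refine HasFDerivAt.congr_fderiv
      ((hcomp.fst).sub ((hasFDerivAt_apply (1 : Fin 4) (0 : Fin 4 → ℝ)).const_mul k)) ?_
    refine ContinuousLinearMap.ext fun v => ?_
    simp [hTv, Matrix.mulVec, dotProduct, Matrix.vecHead, Matrix.vecTail, Fin.sum_univ_four, hM, hgdef]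
    ring
  · refine HasFDerivAt.congr_fderiv
      (hasFDerivAt_apply (3 : Fin 4) (0 : Fin 4 → ℝ)) ?_
    refine ContinuousLinearMap.ext fun v => ?_
    simp [hTv, Matrix.mulVec, dotProduct, Matrix.vecHead, Matrix.vecTail, Fin.sum_univ_four, hM]
  · refine HasFDerivAt.congr_fderiv
      ((hcomp.snd).sub ((hasFDerivAt_apply (3 : Fin 4) (0 : Fin 4 → ℝ)).const_mul k)) ?_
    refine ContinuousLinearMap.ext fun v => ?_
    simp [hTv, Matrix.mulVec, dotProduct, Matrix.vecHead, Matrix.vecTail, Fin.sum_univ_four, hM, hgdef]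
    ring
end

section
/- Let L be an N×N real symmetric positive semidefinite matrix (e.g., the Laplacian of an undirected graph), and let β > 0, k > 0, γ > 0. Then every complex eigenvalue of the 2N×2N block matrix B = [[0, I_N], [−β I_N − L, −k I_N − γ L]] has strictly negative real part (B is Hurwitz). -/
open Matrix

theorem psd_dot (N : ℕ) (L : Matrix (Fin N) (Fin N) ℝ) (hLsymm : L.IsSymm) (hLpsd : L.PosSemidef)
    (x : Fin N → ℂ) :
    ∃ σ : ℝ, 0 ≤ σ ∧ star x ⬝ᵥ (L.map (Complex.ofReal ·)) *ᵥ x = (σ : ℂ) := by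
  set a : Fin N → ℝ := fun i => (x i).re with ha
  set b : Fin N → ℝ := fun i => (x i).im with hb
  have hsymm : ∀ i j, L i j = L j i := fun i j => (Matrix.IsSymm.apply hLsymm j i)
  refine ⟨a ⬝ᵥ L *ᵥ a + b ⬝ᵥ L *ᵥ b, ?_, ?_⟩
  · have h1 := hLpsd.dotProduct_mulVec_nonneg a
    have h2 := hLpsd.dotProduct_mulVec_nonneg b
    simp only [star_trivial] at h1 h2
    linarith
  · have hsum : star x ⬝ᵥ (L.map (Complex.ofReal ·)) *ᵥ x
        = ∑ i, ∑ j, (L i j : ℂ) * ((starRingEnd ℂ) (x i) * x j) := by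
      simp only [dotProduct, Matrix.mulVec, Matrix.map_apply, Pi.star_apply,
        Complex.star_def, Finset.mul_sum]
      congr 1; funext i; congr 1; funext j; ring
    have hab : a ⬝ᵥ L *ᵥ a + b ⬝ᵥ L *ᵥ b = ∑ i, ∑ j, L i j * (a i * a j + b i * b j) := by
      simp only [dotProduct, Matrix.mulVec, Finset.mul_sum, ← Finset.sum_add_distrib]
      congr 1; funext i; congr 1; funext j; ring
    rw [hsum]
    apply Complex.ext
    · simp only [Complex.re_sum, Complex.mul_re, Complex.mul_im, Complex.ofReal_re,
        Complex.ofReal_im, Complex.conj_re, Complex.conj_im, Complex.ofReal_re]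
      rw [hab]
      exact Finset.sum_congr rfl fun i _ => Finset.sum_congr rfl fun j _ => by ring
    · simp only [Complex.im_sum, Complex.mul_im, Complex.mul_re, Complex.ofReal_re,
        Complex.ofReal_im, Complex.conj_re, Complex.conj_im, Complex.ofReal_im]
      have h1 : ∑ i, ∑ j, L i j * ((x i).re * (x j).im) = ∑ i, ∑ j, L i j * ((x i).im * (x j).re) := by
        rw [Finset.sum_comm]
        exact Finset.sum_congr rfl fun j _ => Finset.sum_congr rfl fun i _ => by
          rw [hsymm i j]; ring
      have expand : ∀ i j : Fin N,
          L i j * ((x i).re * (x j).im + -(x i).im * (x j).re) + 0 * ((x i).re * (x j).re - -(x i).im * (x j).im)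
          = L i j * ((x i).re * (x j).im) - L i j * ((x i).im * (x j).re) := fun i j => by ring
      calc ∑ i, ∑ j, (L i j * ((x i).re * (x j).im + -(x i).im * (x j).re) + 0 * ((x i).re * (x j).re - -(x i).im * (x j).im))
          = ∑ i, ∑ j, (L i j * ((x i).re * (x j).im) - L i j * ((x i).im * (x j).re)) := by
            exact Finset.sum_congr rfl fun i _ => Finset.sum_congr rfl fun j _ => expand i j
        _ = 0 := by
            simp only [Finset.sum_sub_distrib]
            rw [h1]; ring


/-- For a real symmetric positive semidefinite `N×N` matrix `L` and
`β, k, γ > 0`, every complex eigenvalue of the `2N×2N` block matrix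
`B = [[0, I], [−βI − L, −kI − γL]]` has strictly negative real part (`B` is Hurwitz). -/
theorem consensus_jacobian_block_is_hurwitz
    (N : ℕ) (L : Matrix (Fin N) (Fin N) ℝ)
    (hLsymm : L.IsSymm) (hLpsd : L.PosSemidef)
    (β k γ : ℝ) (hβ : 0 < β) (hk : 0 < k) (hγ : 0 < γ) :
    ∀ μ : ℂ, μ ∈ spectrum ℂ
      (Matrix.fromBlocks
        (0 : Matrix (Fin N) (Fin N) ℂ)
        (1 : Matrix (Fin N) (Fin N) ℂ)
        (-((β : ℂ) • (1 : Matrix (Fin N) (Fin N) ℂ)) - L.map (Complex.ofReal ·))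
        (-((k : ℂ) • (1 : Matrix (Fin N) (Fin N) ℂ)) - (γ : ℂ) • L.map (Complex.ofReal ·))) →
      μ.re < 0 := by
  intro μ hμ
  set Lc : Matrix (Fin N) (Fin N) ℂ := L.map (Complex.ofReal ·) with hLc
  set M := Matrix.fromBlocks (0 : Matrix (Fin N) (Fin N) ℂ) (1 : Matrix (Fin N) (Fin N) ℂ)
      (-((β : ℂ) • (1 : Matrix (Fin N) (Fin N) ℂ)) - Lc)
      (-((k : ℂ) • (1 : Matrix (Fin N) (Fin N) ℂ)) - (γ : ℂ) • Lc) with hM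
  -- extract eigenvector
  rw [spectrum.mem_iff, Matrix.isUnit_iff_isUnit_det, isUnit_iff_ne_zero, not_not,
    ← Matrix.exists_mulVec_eq_zero_iff] at hμ
  obtain ⟨v, hv, hMv⟩ := hμ
  have heig : M *ᵥ v = μ • v := by
    rw [Matrix.sub_mulVec, sub_eq_zero] at hMv
    rw [← hMv]; ext i
    simp [Matrix.algebraMap_matrix_apply, Matrix.mulVec, dotProduct]
  set x := v ∘ Sum.inl with hx
  set y := v ∘ Sum.inr with hyy
  have hvelim : v = Sum.elim x y := by funext i; cases i <;> rfl
  rw [hM, hvelim, Matrix.fromBlocks_mulVec] at heig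
  have h1 : (0 : Matrix (Fin N) (Fin N) ℂ) *ᵥ x + (1 : Matrix (Fin N) (Fin N) ℂ) *ᵥ y = μ • x := by
    funext i; exact congrFun heig (Sum.inl i)
  have h2 : (-((β : ℂ) • (1 : Matrix (Fin N) (Fin N) ℂ)) - Lc) *ᵥ x
      + (-((k : ℂ) • (1 : Matrix (Fin N) (Fin N) ℂ)) - (γ : ℂ) • Lc) *ᵥ y = μ • y := by
    funext i; exact congrFun heig (Sum.inr i)
  rw [Matrix.zero_mulVec, Matrix.one_mulVec, zero_add] at h1
  -- h1 : y = μ • x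
  have hxne : x ≠ 0 := by
    intro hx0
    apply hv
    rw [hvelim, hx0, h1, hx0, smul_zero]
    funext i; cases i <;> rfl
  -- dot the second equation with star x
  have hdot := congrArg (fun w => star x ⬝ᵥ w) h2
  simp only [Matrix.sub_mulVec, Matrix.neg_mulVec, Matrix.smul_mulVec,
    Matrix.one_mulVec, h1, Matrix.mulVec_smul, dotProduct_add, dotProduct_sub,
    dotProduct_neg, dotProduct_smul, smul_eq_mul, smul_smul] at hdot
  obtain ⟨σ, hσ0, hσ⟩ := psd_dot N L hLsymm hLpsd x
  have hρ : star x ⬝ᵥ x = ((∑ i, Complex.normSq (x i) : ℝ) : ℂ) := by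
    push_cast
    simp [dotProduct, Complex.normSq_eq_conj_mul_self]
  set r : ℝ := ∑ i, Complex.normSq (x i) with hr
  have hrpos : 0 < r := by
    have hne : ∃ i, x i ≠ 0 := by
      by_contra hc
      push_neg at hc
      exact hxne (funext hc)
    obtain ⟨i, hi⟩ := hne
    exact Finset.sum_pos' (fun j _ => Complex.normSq_nonneg _)
      ⟨i, Finset.mem_univ i, Complex.normSq_pos.2 hi⟩
  rw [hσ, hρ] at hdot
  -- hdot is now a scalar equation in μ, σ, r
  set A := μ.re with hA
  set B := μ.im with hB
  have hre := congrArg Complex.re hdot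
  have him := congrArg Complex.im hdot
  simp only [Complex.add_re, Complex.add_im, Complex.sub_re, Complex.sub_im, Complex.neg_re,
    Complex.neg_im, Complex.mul_re, Complex.mul_im, Complex.ofReal_re, Complex.ofReal_im] at hre him
  by_contra hcon
  push_neg at hcon
  have hfac : μ.im * (2*μ.re*r + k*r + γ*σ) = 0 := by linear_combination -him
  have hposf : (0:ℝ) < 2*μ.re*r + k*r + γ*σ := by
    nlinarith [mul_nonneg hcon hrpos.le, mul_pos hk hrpos, mul_nonneg hγ.le hσ0]
  have hBz : μ.im = 0 := by
    rcases mul_eq_zero.1 hfac with h | h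
    · exact h
    · exact absurd h (by linarith)
  rw [hBz] at hre
  nlinarith [mul_nonneg (mul_nonneg hcon hcon) hrpos.le, mul_nonneg hcon (mul_pos hk hrpos).le,
    mul_nonneg hcon (mul_nonneg hγ.le hσ0), mul_pos hβ hrpos]
end
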